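/- arXiv:1706.03996 — 8 statements merged into one kernel-verified Lean document; each statement's English description precedes it below -/
import Mathlib

section
/- Let V be a finite set with |V| ≥ p + q, and let F be a family of subsets of V each of cardinality at most p. Then there exists a subfamily F̂ ⊆ F with |F̂| ≤ C(p+q, p) such that for every set C ⊆ V with |C| ≤ q, if some L ∈ F satisfies L ∩ C = ∅, then some L̂ ∈ F̂ satisfies L̂ ∩ C = ∅. -/
section EHM
open Nat
variable {α : Type*} [DecidableEq α]

/-- All permutations of the ground finset `V`, as a finset of lists. -/
noncomputable def permsOf (V : Finset α) : Finset (List α) := V.toList.permutations.toFinset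

lemma mem_permsOf {V : Finset α} {l : List α} : l ∈ permsOf V ↔ l.Perm V.toList := by
  simp [permsOf, List.mem_permutations]

lemma card_permsOf (V : Finset α) : (permsOf V).card = V.card ! := by
  rw [permsOf, List.toFinset_card_of_nodup (List.nodup_permutations _ V.nodup_toList),
    List.length_permutations, Finset.length_toList]

lemma cons_mem_permsOf {V : Finset α} {x : α} {l : List α} (hx : x ∈ V)
    (hl : l ∈ permsOf (V.erase x)) : x :: l ∈ permsOf V := by
  rw [mem_permsOf] at hl ⊢
  have h1 : (x :: l : List α).Perm (x :: (V.erase x).toList) := hl.cons x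
  refine h1.trans ?_
  rw [← Multiset.coe_eq_coe]
  show (x ::ₘ ((V.erase x).toList : Multiset α)) = ((V.toList : Multiset α))
  rw [Finset.coe_toList, Finset.coe_toList, Finset.erase_val,
    Multiset.cons_erase (by exact hx : x ∈ V.val)]

/-- `A` comes entirely before `B` in the list `l`. -/
def Bef (A B : Finset α) (l : List α) : Prop :=
  ∀ a ∈ A, ∀ b ∈ B, l.idxOf a < l.idxOf b

instance (A B : Finset α) (l : List α) : Decidable (Bef A B l) := by
  unfold Bef; infer_instance

/-- Number of permutations of `V` in which `A` comes entirely before `B`. -/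
noncomputable def bCount (A B V : Finset α) : ℕ :=
  ((permsOf V).filter (fun l => Bef A B l)).card

lemma key_count : ∀ (n : ℕ) (V A B : Finset α), V.card = n → A ⊆ V → B ⊆ V → Disjoint A B →
    A.card ! * B.card ! * n ! ≤ (A.card + B.card)! * bCount A B V := by
  intro n
  induction n with
  | zero =>
    intro V A B hcard hA hB _
    have hV : V = ∅ := Finset.card_eq_zero.mp hcard
    subst hV
    have hA0 : A = ∅ := Finset.subset_empty.mp hA
    have hB0 : B = ∅ := Finset.subset_empty.mp hB
    subst hA0; subst hB0
    have hmem : [] ∈ (permsOf (∅ : Finset α)).filter (fun l => Bef (∅ : Finset α) ∅ l) := by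
      simp [mem_permsOf, Bef, Finset.toList_empty]
    have h1 : 1 ≤ bCount (∅ : Finset α) ∅ ∅ := Finset.card_pos.mpr ⟨_, hmem⟩
    simpa [bCount] using h1
  | succ n ih =>
    intro V A B hcard hA hB hAB
    by_cases hA0 : A = ∅
    · subst hA0
      have hfull : bCount (∅ : Finset α) B V = (n+1)! := by
        rw [bCount]
        rw [Finset.filter_true_of_mem (fun l _ => by
          intro a ha; exact absurd ha (Finset.notMem_empty a))]
        rw [card_permsOf, hcard]
      rw [hfull]
      simp
    · -- A nonempty
      obtain ⟨a', ha'⟩ : ∃ a', A.card = a' + 1 :=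
        Nat.exists_eq_succ_of_ne_zero (by simpa [Finset.card_eq_zero] using hA0)
      set b := B.card with hb
      set W := V \ (A ∪ B) with hWdef
      have hABV : A ∪ B ⊆ V := Finset.union_subset hA hB
      have hUcard : (A ∪ B).card = A.card + b := Finset.card_union_of_disjoint hAB
      have habn : A.card + b ≤ n + 1 := by
        rw [← hUcard, ← hcard]; exact Finset.card_le_card hABV
      have hWcard : W.card = (n+1) - (A.card + b) := by
        rw [hWdef, Finset.card_sdiff_of_subset hABV, hcard, hUcard]
      have hAW : Disjoint A W := by
        refine Finset.disjoint_left.mpr fun x hxA hxW => ?_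
        exact (Finset.mem_sdiff.mp hxW).2 (Finset.mem_union_left _ hxA)
      set S := A ∪ W with hSdef
      have hSV : S ⊆ V := Finset.union_subset hA (Finset.sdiff_subset)
      have hSB : ∀ x ∈ S, x ∉ B := by
        intro x hx
        rcases Finset.mem_union.mp hx with h | h
        · exact fun hxB => Finset.disjoint_left.mp hAB h hxB
        · exact fun hxB => (Finset.mem_sdiff.mp h).2 (Finset.mem_union_right _ hxB)
      -- the main injection
      have hmain : ∀ x ∈ S, ∀ l ∈ (permsOf (V.erase x)).filter
          (fun l => Bef (A.erase x) B l),
          x :: l ∈ (permsOf V).filter (fun l => Bef A B l) := by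
        intro x hxS l hl
        rw [Finset.mem_filter] at hl ⊢
        refine ⟨cons_mem_permsOf (hSV hxS) hl.1, ?_⟩
        intro a haA c hcB
        have hcx : c ≠ x := fun h => hSB x hxS (h ▸ hcB)
        rw [List.idxOf_cons_ne l (Ne.symm hcx)]
        by_cases hax : a = x
        · subst hax; rw [List.idxOf_cons_self]; exact Nat.succ_pos _
        · rw [List.idxOf_cons_ne l (Ne.symm hax)]
          exact Nat.succ_lt_succ (hl.2 a (Finset.mem_erase.mpr ⟨hax, haA⟩) c hcB)
      have hdisjim : ∀ x ∈ S, ∀ y ∈ S, x ≠ y →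
          Disjoint (((permsOf (V.erase x)).filter (fun l => Bef (A.erase x) B l)).image (x :: ·))
            (((permsOf (V.erase y)).filter (fun l => Bef (A.erase y) B l)).image (y :: ·)) := by
        intro x _ y _ hxy
        refine Finset.disjoint_left.mpr fun l h1 h2 => ?_
        obtain ⟨l1, _, rfl⟩ := Finset.mem_image.mp h1
        obtain ⟨l2, _, he⟩ := Finset.mem_image.mp h2
        exact hxy (by injection he.symm)
      have hcount : ∑ x ∈ S, bCount (A.erase x) B (V.erase x) ≤ bCount A B V := by
        have h1 : ∑ x ∈ S, bCount (A.erase x) B (V.erase x)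
            = (S.biUnion (fun x => ((permsOf (V.erase x)).filter
                (fun l => Bef (A.erase x) B l)).image (x :: ·))).card := by
          rw [Finset.card_biUnion hdisjim]
          refine Finset.sum_congr rfl fun x _ => ?_
          rw [bCount, Finset.card_image_of_injective _ (fun l1 l2 h => by injection h)]
        rw [bCount, h1]
        refine Finset.card_le_card (Finset.biUnion_subset.mpr fun x hx => ?_)
        intro l hl
        obtain ⟨l', hl', rfl⟩ := Finset.mem_image.mp hl
        exact hmain x hx l' hl'
      have hAx : ∀ x ∈ A, (A.card + b) * (a' ! * b ! * n !)
          ≤ (A.card + b)! * bCount (A.erase x) B (V.erase x) := by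
        intro x hxA
        have e2 : (V.erase x).card = n := by
          have := Finset.card_erase_add_one (hA hxA); omega
        have e1 : (A.erase x).card = a' := by
          have := Finset.card_erase_add_one hxA; omega
        have hxB : x ∉ B := fun h => Finset.disjoint_left.mp hAB hxA h
        have hIH := ih (V.erase x) (A.erase x) B e2
          (Finset.erase_subset_erase _ hA)
          (Finset.subset_erase.mpr ⟨hB, hxB⟩)
          (hAB.mono_left (Finset.erase_subset _ _))
        rw [e1] at hIH
        calc (A.card + b) * (a' ! * b ! * n !)
            ≤ (A.card + b) * ((a' + b)! * bCount (A.erase x) B (V.erase x)) :=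
              Nat.mul_le_mul_left _ hIH
          _ = (A.card + b)! * bCount (A.erase x) B (V.erase x) := by
              rw [show A.card + b = (a' + b) + 1 by omega, Nat.factorial_succ, mul_assoc]
      have hWx : ∀ x ∈ W, A.card ! * b ! * n !
          ≤ (A.card + b)! * bCount (A.erase x) B (V.erase x) := by
        intro x hxW
        obtain ⟨hxV, hxAB⟩ := Finset.mem_sdiff.mp hxW
        have hxA : x ∉ A := fun h => hxAB (Finset.mem_union_left _ h)
        have hxB : x ∉ B := fun h => hxAB (Finset.mem_union_right _ h)
        have e2 : (V.erase x).card = n := by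
          have := Finset.card_erase_add_one hxV; omega
        have hIH := ih (V.erase x) A B e2
          (Finset.subset_erase.mpr ⟨hA, hxA⟩) (Finset.subset_erase.mpr ⟨hB, hxB⟩) hAB
        rwa [Finset.erase_eq_of_notMem hxA]
      calc A.card ! * b ! * (n+1)!
          = ((A.card + b) + ((n+1) - (A.card + b))) * (A.card ! * b ! * n !) := by
            rw [Nat.add_sub_cancel' habn, Nat.factorial_succ]; ring
        _ = (∑ _x ∈ A, (A.card + b) * (a' ! * b ! * n !))
            + (∑ _x ∈ W, A.card ! * b ! * n !) := by
            rw [Finset.sum_const, Finset.sum_const, smul_eq_mul, smul_eq_mul, hWcard, ha',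
              Nat.factorial_succ]
            ring
        _ ≤ (∑ x ∈ A, (A.card + b)! * bCount (A.erase x) B (V.erase x))
            + (∑ x ∈ W, (A.card + b)! * bCount (A.erase x) B (V.erase x)) :=
            Nat.add_le_add (Finset.sum_le_sum hAx) (Finset.sum_le_sum hWx)
        _ = (A.card + b)! * ∑ x ∈ S, bCount (A.erase x) B (V.erase x) := by
            rw [hSdef, Finset.sum_union hAW, mul_add, Finset.mul_sum, Finset.mul_sum]
        _ ≤ (A.card + b)! * bCount A B V := Nat.mul_le_mul_left _ hcount

lemma boll (V : Finset α) (p q : ℕ) (G : Finset (Finset α)) (Bw : Finset α → Finset α)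
    (hsubA : ∀ L ∈ G, L ⊆ V) (hsubB : ∀ L ∈ G, Bw L ⊆ V)
    (hdisj : ∀ L ∈ G, Disjoint L (Bw L))
    (hcross : ∀ L ∈ G, ∀ L' ∈ G, L ≠ L' → ¬Disjoint L (Bw L'))
    (hp : ∀ L ∈ G, L.card ≤ p) (hq : ∀ L ∈ G, (Bw L).card ≤ q) :
    G.card ≤ (p + q).choose p := by
  set m := V.card with hm
  set K := (p + q).choose p with hK
  have hper : ∀ L ∈ G, m ! ≤ K * bCount L (Bw L) V := by
    intro L hL
    have hk := key_count m V L (Bw L) rfl (hsubA L hL) (hsubB L hL) (hdisj L hL)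
    have hCle : (L.card + (Bw L).card).choose L.card ≤ K := by
      calc (L.card + (Bw L).card).choose L.card
          = (L.card + (Bw L).card).choose (Bw L).card := Nat.choose_symm_add
        _ ≤ (p + (Bw L).card).choose (Bw L).card :=
            Nat.choose_le_choose _ (Nat.add_le_add_right (hp L hL) _)
        _ = (p + (Bw L).card).choose p := Nat.choose_symm_add.symm
        _ ≤ K := Nat.choose_le_choose _ (Nat.add_le_add_left (hq L hL) p)
    have hfac : (L.card + (Bw L).card).choose L.card * L.card ! * (Bw L).card !
        = (L.card + (Bw L).card)! := by
      have := Nat.choose_mul_factorial_mul_factorial (Nat.le_add_right L.card (Bw L).card)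
      rwa [Nat.add_sub_cancel_left] at this
    have h2 : L.card ! * (Bw L).card ! * m !
        ≤ L.card ! * (Bw L).card !
          * ((L.card + (Bw L).card).choose L.card * bCount L (Bw L) V) := by
      calc L.card ! * (Bw L).card ! * m !
          ≤ (L.card + (Bw L).card)! * bCount L (Bw L) V := hk
        _ = _ := by rw [← hfac]; ring
    have h3 : m ! ≤ (L.card + (Bw L).card).choose L.card * bCount L (Bw L) V := by
      exact Nat.le_of_mul_le_mul_left h2
        (Nat.mul_pos (Nat.factorial_pos _) (Nat.factorial_pos _))
    exact h3.trans (Nat.mul_le_mul_right _ hCle)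
  have hdisjf : ∀ L ∈ G, ∀ L' ∈ G, L ≠ L' →
      Disjoint ((permsOf V).filter (fun l => Bef L (Bw L) l))
        ((permsOf V).filter (fun l => Bef L' (Bw L') l)) := by
    intro L hL L' hL' hne
    refine Finset.disjoint_left.mpr fun l h1 h2 => ?_
    rw [Finset.mem_filter] at h1 h2
    obtain ⟨y, hyL, hyB'⟩ := Finset.not_disjoint_iff.mp (hcross L hL L' hL' hne)
    obtain ⟨z, hzL', hzB⟩ := Finset.not_disjoint_iff.mp (hcross L' hL' L hL hne.symm)
    have o1 := h1.2 y hyL z hzB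
    have o2 := h2.2 z hzL' y hyB'
    omega
  have hsum : ∑ L ∈ G, bCount L (Bw L) V ≤ m ! := by
    calc ∑ L ∈ G, bCount L (Bw L) V
        = (G.biUnion (fun L => (permsOf V).filter (fun l => Bef L (Bw L) l))).card :=
          (Finset.card_biUnion hdisjf).symm
      _ ≤ (permsOf V).card :=
          Finset.card_le_card (Finset.biUnion_subset.mpr fun L _ => Finset.filter_subset _ _)
      _ = m ! := card_permsOf V
  have hfinal : G.card * m ! ≤ K * m ! := by
    calc G.card * m ! = ∑ _L ∈ G, m ! := by rw [Finset.sum_const, smul_eq_mul]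
      _ ≤ ∑ L ∈ G, K * bCount L (Bw L) V := Finset.sum_le_sum hper
      _ = K * ∑ L ∈ G, bCount L (Bw L) V := (Finset.mul_sum _ _ _).symm
      _ ≤ K * m ! := Nat.mul_le_mul_left _ hsum
  exact Nat.le_of_mul_le_mul_right hfinal (Nat.factorial_pos m)

end EHM


/-- **Erdős–Hajnal–Moon lemma.** Let `V` be a finite set with `|V| ≥ p + q`, and `F` a family
of subsets of `V` each of cardinality at most `p`. Then there is a subfamily `F̂ ⊆ F` with
`|F̂| ≤ C(p+q, p)` such that for every `C ⊆ V` with `|C| ≤ q`, if some `L ∈ F` is disjoint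
from `C`, then some `L̂ ∈ F̂` is disjoint from `C`. -/
theorem erdos_hajnal_moon {α : Type*} [DecidableEq α] (V : Finset α) (p q : ℕ)
    (hV : p + q ≤ V.card) (F : Finset (Finset α))
    (hF : ∀ L ∈ F, L ⊆ V ∧ L.card ≤ p) :
    ∃ Fhat ⊆ F, Fhat.card ≤ (p + q).choose p ∧
      ∀ C ⊆ V, C.card ≤ q → (∃ L ∈ F, Disjoint L C) → ∃ Lhat ∈ Fhat, Disjoint Lhat C := by
  classical
  set P : Finset (Finset α) → Prop := fun G =>
    ∀ C ⊆ V, C.card ≤ q → (∃ L ∈ F, Disjoint L C) → ∃ Lhat ∈ G, Disjoint Lhat C with hPdef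
  have hex : ∃ n, ∃ G, G ⊆ F ∧ P G ∧ G.card = n :=
    ⟨F.card, F, Finset.Subset.refl F, fun C _ _ h => h, rfl⟩
  obtain ⟨G, hGF, hGP, hGmin⟩ :
      ∃ G, G ⊆ F ∧ P G ∧ ∀ G', G' ⊆ F → P G' → G.card ≤ G'.card := by
    obtain ⟨G, hG1, hG2, hG3⟩ := Nat.find_spec hex
    exact ⟨G, hG1, hG2, fun G' h1 h2 =>
      le_trans (le_of_eq hG3) (Nat.find_min' hex ⟨G', h1, h2, rfl⟩)⟩
  have hwit : ∀ L ∈ G, ∃ C, C ⊆ V ∧ C.card ≤ q ∧ Disjoint L C ∧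
      ∀ L' ∈ G, L' ≠ L → ¬Disjoint L' C := by
    intro L hL
    have hno : ¬ P (G.erase L) := by
      intro hPe
      have h1 := hGmin (G.erase L) ((Finset.erase_subset _ _).trans hGF) hPe
      have h2 := Finset.card_erase_add_one hL
      omega
    simp only [hPdef] at hno
    push_neg at hno
    obtain ⟨C, hCV, hCq, hCex, hCnone⟩ := hno
    obtain ⟨Lh, hLhG, hLhC⟩ := hGP C hCV hCq hCex
    have hLhL : Lh = L := by
      by_contra hne
      exact hCnone Lh (Finset.mem_erase.mpr ⟨hne, hLhG⟩) hLhC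
    subst hLhL
    exact ⟨C, hCV, hCq, hLhC,
      fun L' hL' hne => hCnone L' (Finset.mem_erase.mpr ⟨hne, hL'⟩)⟩
  choose! Cw hC1 hC2 hC3 hC4 using hwit
  refine ⟨G, hGF, ?_, hGP⟩
  exact boll V p q G Cw (fun L hL => (hF L (hGF hL)).1) hC1 hC3
    (fun L hL L' hL' hne => hC4 L' hL' L hL hne)
    (fun L hL => (hF L (hGF hL)).2) hC2
end

section
/- Let V be a finite set, and F a family of subsets of V each of cardinality at most p. Then there exists a subfamily F̂ ⊆ F with |F̂| ≤ ∑_{i=0}^{q} p^i such that for every set C ⊆ V with |C| ≤ q, if some L ∈ F is disjoint from C, then some L̂ ∈ F̂ is disjoint from C. -/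
/-- Algorithmic version of the Erdős–Hajnal–Moon lemma (Monien's bound): every family `F` of
subsets of a finite set `V`, each of cardinality at most `p`, has a subfamily `F̂ ⊆ F` with
`|F̂| ≤ ∑_{i=0}^{q} p^i` such that for every `C ⊆ V` with `|C| ≤ q`, if some `L ∈ F` is
disjoint from `C`, then some `L̂ ∈ F̂` is disjoint from `C`. -/
theorem compact_representation_monien {α : Type*} [DecidableEq α] (V : Finset α) (p q : ℕ)
    (F : Finset (Finset α)) (hF : ∀ L ∈ F, L ⊆ V ∧ L.card ≤ p) :
    ∃ Fhat ⊆ F, Fhat.card ≤ ∑ i ∈ Finset.range (q + 1), p ^ i ∧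
      ∀ C ⊆ V, C.card ≤ q → (∃ L ∈ F, Disjoint L C) → ∃ Lhat ∈ Fhat, Disjoint Lhat C := by
  induction q generalizing F with
  | zero =>
    rcases F.eq_empty_or_nonempty with rfl | ⟨L0, hL0⟩
    · exact ⟨∅, Finset.Subset.refl _, by simp, by rintro C _ _ ⟨L, hL, _⟩; simp at hL⟩
    · refine ⟨{L0}, by simpa, by simp, ?_⟩
      intro C _ hC _
      refine ⟨L0, Finset.mem_singleton_self _, ?_⟩
      rw [Nat.le_zero, Finset.card_eq_zero] at hC
      subst hC; simp
  | succ q ih =>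
    rcases F.eq_empty_or_nonempty with rfl | ⟨L0, hL0⟩
    · exact ⟨∅, Finset.Subset.refl _, by simp, by rintro C _ _ ⟨L, hL, _⟩; simp at hL⟩
    · choose! G hG1 hG2 hG3 using fun x =>
        ih (F.filter (fun L => x ∉ L)) (fun L hL => hF L (Finset.mem_of_mem_filter L hL))
      refine ⟨insert L0 (L0.biUnion G), ?_, ?_, ?_⟩
      · intro A hA
        rcases Finset.mem_insert.mp hA with rfl | hA
        · exact hL0
        · obtain ⟨x, _, hx⟩ := Finset.mem_biUnion.mp hA
          exact Finset.mem_of_mem_filter A (hG1 x hx)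
      · calc (insert L0 (L0.biUnion G)).card ≤ (L0.biUnion G).card + 1 := by
              simpa using Finset.card_insert_le _ _
          _ ≤ (∑ x ∈ L0, (G x).card) + 1 := by gcongr; exact Finset.card_biUnion_le
          _ ≤ (∑ _x ∈ L0, ∑ i ∈ Finset.range (q+1), p ^ i) + 1 := by
              gcongr with x hx; exact hG2 x
          _ = L0.card * (∑ i ∈ Finset.range (q+1), p ^ i) + 1 := by
              rw [Finset.sum_const, smul_eq_mul]
          _ ≤ p * (∑ i ∈ Finset.range (q+1), p ^ i) + 1 := by
              gcongr; exact (hF L0 hL0).2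
          _ = ∑ i ∈ Finset.range (q+1+1), p ^ i := geom_sum_succ.symm
      · rintro C hC hCcard ⟨L, hL, hdisj⟩
        by_cases h0 : Disjoint L0 C
        · exact ⟨L0, Finset.mem_insert_self _ _, h0⟩
        · obtain ⟨x, hxL0, hxC⟩ := Finset.not_disjoint_iff.mp h0
          have hLmem : L ∈ F.filter (fun L => x ∉ L) :=
            Finset.mem_filter.mpr ⟨hL, fun hxL => (Finset.disjoint_left.mp hdisj hxL) hxC⟩
          obtain ⟨Lhat, hLhat, hLd⟩ := hG3 x (C.erase x) ((C.erase_subset x).trans hC)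
            (by have := Finset.card_erase_of_mem hxC; omega)
            ⟨L, hLmem, hdisj.mono_right (C.erase_subset x)⟩
          refine ⟨Lhat, Finset.mem_insert_of_mem (Finset.mem_biUnion.mpr ⟨x, hxL0, hLhat⟩), ?_⟩
          have hxnot : x ∉ Lhat := by
            have := (Finset.mem_filter.mp (hG1 x hLhat)).2
            simpa using this
          rw [Finset.disjoint_left]
          intro a haL haC
          exact Finset.disjoint_left.mp hLd haL
            (Finset.mem_erase.mpr ⟨fun h => hxnot (h ▸ haL), haC⟩)
end

section
/- Let G be a simple graph on n vertices, and let u be a vertex such that ∑_{v ∈ N(u)} deg(v) ≥ 2n + 1. Then u lies on a cycle of length 4 in G. -/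
/-- If a vertex `u` of an `n`-vertex simple graph satisfies `∑_{v ∈ N(u)} deg(v) ≥ 2n + 1`,
then `u` lies on a cycle of length 4. -/
theorem mem_C4_of_large_neighbor_degree_sum {α : Type*} [Fintype α] [DecidableEq α]
    (G : SimpleGraph α) [DecidableRel G.Adj] (n : ℕ) (hn : Fintype.card α = n)
    (u : α) (hu : 2 * n + 1 ≤ ∑ v ∈ G.neighborFinset u, G.degree v) :
    ∃ v₁ w v₂ : α, u ≠ v₁ ∧ u ≠ w ∧ u ≠ v₂ ∧ v₁ ≠ w ∧ v₁ ≠ v₂ ∧ w ≠ v₂ ∧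
      G.Adj u v₁ ∧ G.Adj v₁ w ∧ G.Adj w v₂ ∧ G.Adj v₂ u := by
  have key : ∃ w, w ≠ u ∧ 1 < (G.neighborFinset u ∩ G.neighborFinset w).card := by
    by_contra h
    push_neg at h
    have hsum : ∑ v ∈ G.neighborFinset u, G.degree v
        = ∑ w : α, (G.neighborFinset u ∩ G.neighborFinset w).card := by
      have h1 : ∀ v, G.degree v = ∑ w : α, if G.Adj v w then 1 else 0 := by
        intro v
        rw [SimpleGraph.degree, SimpleGraph.neighborFinset_eq_filter, Finset.card_filter]
      simp_rw [h1]
      rw [Finset.sum_comm]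
      refine Finset.sum_congr rfl fun w _ => ?_
      rw [← Finset.card_filter]
      congr 1
      ext v
      simp [SimpleGraph.adj_comm, and_comm]
    have hdeg : G.degree u ≤ n - 1 := by
      have : G.neighborFinset u ⊆ Finset.univ.erase u := by
        intro v hv
        rw [SimpleGraph.mem_neighborFinset] at hv
        exact Finset.mem_erase.mpr ⟨hv.ne', Finset.mem_univ v⟩
      calc G.degree u ≤ (Finset.univ.erase u).card := Finset.card_le_card this
        _ = n - 1 := by rw [Finset.card_erase_of_mem (Finset.mem_univ u), Finset.card_univ, hn]
    have hb : ∑ w : α, (G.neighborFinset u ∩ G.neighborFinset w).card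
        ≤ (n - 1) + (n - 1) := by
      rw [← Finset.add_sum_erase _ _ (Finset.mem_univ u)]
      have h2 : ∑ w ∈ Finset.univ.erase u, (G.neighborFinset u ∩ G.neighborFinset w).card
          ≤ ∑ _w ∈ Finset.univ.erase u, 1 := by
        refine Finset.sum_le_sum fun w hw => ?_
        exact h w (Finset.mem_erase.mp hw).1
      have h3 : (G.neighborFinset u ∩ G.neighborFinset u).card ≤ n - 1 := by
        rw [Finset.inter_self]; exact hdeg
      calc _ ≤ (n-1) + ∑ _w ∈ Finset.univ.erase u, 1 := Nat.add_le_add h3 h2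
        _ = (n-1) + (n-1) := by
            rw [Finset.sum_const, smul_eq_mul, mul_one,
              Finset.card_erase_of_mem (Finset.mem_univ u), Finset.card_univ, hn]
    rw [hsum] at hu
    omega
  obtain ⟨w, hw, hcard⟩ := key
  obtain ⟨v₁, hv₁, v₂, hv₂, hne⟩ := Finset.one_lt_card.mp hcard
  rw [Finset.mem_inter, SimpleGraph.mem_neighborFinset, SimpleGraph.mem_neighborFinset] at hv₁ hv₂
  exact ⟨v₁, w, v₂, hv₁.1.ne, hw.symm, hv₂.1.ne, hv₁.2.ne.symm,
    hne, hv₂.2.ne, hv₁.1, hv₁.2.symm, hv₂.2, hv₂.1.symm⟩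
end

section
/- Let G be a simple graph on n vertices containing a 4-cycle (u, v₁, w, v₂). If every vertex x of G satisfies ∑_{v ∈ N(x)} deg(x) ≤ 2n and deg(w) > √(2n), then w is among the min{√(2n), deg(v₁)} highest-degree neighbors of v₁ and among the min{√(2n), deg(v₂)} highest-degree neighbors of v₂. -/
lemma heavy_aux {α : Type*} [Fintype α] [DecidableEq α]
    (G : SimpleGraph α) [DecidableRel G.Adj] (n : ℕ) (hn : Fintype.card α = n)
    (w v : α)
    (hsum : ∀ x : α, (∑ v ∈ G.neighborFinset x, G.degree v) ≤ 2 * n)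
    (hw : Real.sqrt (2 * n) < (G.degree w : ℝ)) :
    ((((G.neighborFinset v).filter (fun x => G.degree w ≤ G.degree x)).card : ℝ) ≤
        min (Real.sqrt (2 * n)) (G.degree v : ℝ)) := by
  set s := (G.neighborFinset v).filter (fun x => G.degree w ≤ G.degree x) with hs
  have h1 : s.card * G.degree w ≤ ∑ x ∈ s, G.degree x := by
    rw [← smul_eq_mul]
    apply Finset.card_nsmul_le_sum
    intro x hx
    exact (Finset.mem_filter.mp hx).2
  have h2 : ∑ x ∈ s, G.degree x ≤ ∑ x ∈ G.neighborFinset v, G.degree x :=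
    Finset.sum_le_sum_of_subset (Finset.filter_subset _ _)
  have h3 : s.card * G.degree w ≤ 2 * n := le_trans h1 (le_trans h2 (hsum v))
  have h3' : (s.card : ℝ) * (G.degree w : ℝ) ≤ 2 * n := by exact_mod_cast h3
  have hsq : Real.sqrt (2 * n) * Real.sqrt (2 * n) = 2 * n := by
    rw [Real.mul_self_sqrt]; positivity
  apply le_min
  · nlinarith [Real.sqrt_nonneg (2 * (n:ℝ)), Nat.cast_nonneg (α := ℝ) s.card]
  · have : s.card ≤ (G.neighborFinset v).card := Finset.card_filter_le _ _
    rw [G.card_neighborFinset_eq_degree] at this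
    exact_mod_cast this

/-- Suppose the `n`-vertex graph `G` contains a 4-cycle `(u, v₁, w, v₂)`, every vertex `x`
satisfies `∑_{v ∈ N(x)} deg(v) ≤ 2n`, and `deg(w) > √(2n)`. Then `w` is among the
`min{√(2n), deg(v₁)}` highest-degree neighbors of `v₁`, and similarly for `v₂`:
formally, the number of neighbors of `vᵢ` of degree at least `deg(w)` is at most
`min{√(2n), deg(vᵢ)}`, so any choice of the top-degree neighbor set of `vᵢ` contains `w`. -/
theorem heavy_cycle_vertex_in_top_neighbors {α : Type*} [Fintype α] [DecidableEq α]
    (G : SimpleGraph α) [DecidableRel G.Adj] (n : ℕ) (hn : Fintype.card α = n)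
    (u v₁ w v₂ : α)
    (hd : u ≠ v₁ ∧ u ≠ w ∧ u ≠ v₂ ∧ v₁ ≠ w ∧ v₁ ≠ v₂ ∧ w ≠ v₂)
    (hcyc : G.Adj u v₁ ∧ G.Adj v₁ w ∧ G.Adj w v₂ ∧ G.Adj v₂ u)
    (hsum : ∀ x : α, (∑ v ∈ G.neighborFinset x, G.degree v) ≤ 2 * n)
    (hw : Real.sqrt (2 * n) < (G.degree w : ℝ)) :
    ((((G.neighborFinset v₁).filter (fun v => G.degree w ≤ G.degree v)).card : ℝ) ≤
        min (Real.sqrt (2 * n)) (G.degree v₁ : ℝ)) ∧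
    ((((G.neighborFinset v₂).filter (fun v => G.degree w ≤ G.degree v)).card : ℝ) ≤
        min (Real.sqrt (2 * n)) (G.degree v₂ : ℝ)) := by
  exact ⟨heavy_aux G n hn w v₁ hsum hw, heavy_aux G n hn w v₂ hsum hw⟩
end

section
/- Let T be a tree on k vertices rooted at r, labeled so that every vertex's label is larger than the labels of all its children (e.g., labels assigned in decreasing order along a BFS from the root, with the root labeled k). Let G be a graph whose vertices are each colored with a color in {1,…,k}. Define inductively: a vertex u of G is 'active for color c' if u has color c and for every child c' of c in T there is a neighbor of u that is active for color c'. Then some vertex of G is active for color k if and only if G contains a subgraph isomorphic to T in which the coloring of the subgraph's vertices coincides (via the isomorphism) with the labeling of T. -/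
/-- The `active` predicate of the randomized tree-detection algorithm, defined by recursion
on the label `c`. The tree `T` on labels `Fin k` is encoded by a parent function, with every
non-root label smaller than its parent. A vertex `u` of `G` is active for color `c` iff
`u` has color `c` and for every child `c'` of `c` in `T` some neighbor of `u` is active
for color `c'`. -/
def Active {α : Type*} (G : SimpleGraph α) {k : ℕ} (color : α → Fin k)
    (parent : Fin k → Fin k) : Fin k → α → Prop
  | c, u => color u = c ∧
      ∀ c' : Fin k, c' < c → parent c' = c → ∃ v : α, G.Adj u v ∧ Active G color parent c' v
termination_by c _ => (c : ℕ)

theorem active_iff' {α : Type*} (G : SimpleGraph α) {k : ℕ} (color : α → Fin k)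
    (parent : Fin k → Fin k) (c : Fin k) (u : α) :
    Active G color parent c u ↔ (color u = c ∧
      ∀ c' : Fin k, c' < c → parent c' = c → ∃ v : α, G.Adj u v ∧ Active G color parent c' v) := by
  rw [Active]

noncomputable def buildEmb {α : Type*} (G : SimpleGraph α) {k : ℕ} (color : α → Fin k)
    (parent : Fin k → Fin k) (root : Fin k)
    (hlab : ∀ i : Fin k, i ≠ root → i < parent i)
    (u₀ : α) (h₀ : Active G color parent root u₀) :
    (c : Fin k) → {v : α // Active G color parent c v} := fun c =>
  if h : c = root then ⟨u₀, h ▸ h₀⟩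
  else
    let w := buildEmb G color parent root hlab u₀ h₀ (parent c)
    let hw := (active_iff' G color parent (parent c) w.1).mp w.2
    ⟨(hw.2 c (hlab c h) rfl).choose, (hw.2 c (hlab c h) rfl).choose_spec.2⟩
termination_by c => k - (c : ℕ)
decreasing_by exact Nat.sub_lt_sub_left c.isLt (hlab c h)

theorem buildEmb_adj {α : Type*} (G : SimpleGraph α) {k : ℕ} (color : α → Fin k)
    (parent : Fin k → Fin k) (root : Fin k)
    (hlab : ∀ i : Fin k, i ≠ root → i < parent i)
    (u₀ : α) (h₀ : Active G color parent root u₀) (c : Fin k) (h : c ≠ root) :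
    G.Adj (buildEmb G color parent root hlab u₀ h₀ (parent c)).1
      (buildEmb G color parent root hlab u₀ h₀ c).1 := by
  have heq : (buildEmb G color parent root hlab u₀ h₀ c).1 =
      (((active_iff' G color parent (parent c) _).mp
        (buildEmb G color parent root hlab u₀ h₀ (parent c)).2).2 c (hlab c h) rfl).choose := by
    conv_lhs => rw [buildEmb]
    rw [dif_neg h]
  rw [heq]
  exact (((active_iff' G color parent (parent c) _).mp
    (buildEmb G color parent root hlab u₀ h₀ (parent c)).2).2 c (hlab c h) rfl).choose_spec.1

/-- Correctness of color coding for tree detection: some vertex of `G` is active for the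
root label (the largest label `k`) iff `G` contains a subgraph isomorphic to `T` whose
vertex colors coincide with the labels of `T` under the isomorphism. -/
theorem active_iff_well_colored_copy {α : Type*} [Fintype α] (G : SimpleGraph α)
    (k : ℕ) (hk : 0 < k) (parent : Fin k → Fin k) (root : Fin k)
    (hroot : parent root = root) (hlab : ∀ i : Fin k, i ≠ root → i < parent i)
    (hreach : ∀ i : Fin k, ∃ n : ℕ, parent^[n] i = root)
    (color : α → Fin k) :
    (∃ u : α, Active G color parent root u) ↔
      ∃ φ : Fin k → α, Function.Injective φ ∧ (∀ c : Fin k, color (φ c) = c) ∧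
        ∀ i : Fin k, i ≠ root → G.Adj (φ i) (φ (parent i)) := by
  constructor
  · rintro ⟨u₀, h₀⟩
    refine ⟨fun c => (buildEmb G color parent root hlab u₀ h₀ c).1, ?_, ?_, ?_⟩
    · intro a b hab
      dsimp only at hab
      have ha := ((active_iff' G color parent a _).mp (buildEmb G color parent root hlab u₀ h₀ a).2).1
      have hb := ((active_iff' G color parent b _).mp (buildEmb G color parent root hlab u₀ h₀ b).2).1
      rw [hab, hb] at ha
      exact ha.symm
    · intro c
      exact ((active_iff' G color parent c _).mp (buildEmb G color parent root hlab u₀ h₀ c).2).1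
    · intro i hi
      exact (buildEmb_adj G color parent root hlab u₀ h₀ i hi).symm
  · rintro ⟨φ, hinj, hcol, hadj⟩
    suffices h : ∀ n : ℕ, ∀ c : Fin k, (c : ℕ) ≤ n → Active G color parent c (φ c) by
      exact ⟨φ root, h root root le_rfl⟩
    intro n
    induction n with
    | zero =>
      intro c hc
      rw [active_iff']
      refine ⟨hcol c, fun c' hc' _ => absurd hc' (by omega)⟩
    | succ n ih =>
      intro c hc
      rw [active_iff']
      refine ⟨hcol c, fun c' hc' hp => ?_⟩
      have hc'root : c' ≠ root := by
        intro h
        subst h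
        rw [hroot] at hp
        subst hp
        exact lt_irrefl _ hc'
      refine ⟨φ c', ?_, ih c' (by omega)⟩
      have := hadj c' hc'root
      rw [hp] at this
      exact this.symm
end

section
/- Let T be a tree rooted at r with subtrees T_ℓ for each vertex ℓ, and let G be a graph. Suppose for every vertex v of G and every vertex j of T, SOS_v(T_j) is a family of subtrees of G rooted at v, each isomorphic to T_j (as rooted trees), satisfying: for every set C ⊆ V(G) with |C| ≤ |V(T)| − |V(T_j)|, if G contains a subtree rooted at v isomorphic to T_j avoiding C, then SOS_v(T_j) contains such a subtree avoiding C. Let ℓ be a vertex of T with children j₁,…,j_s, let u ∈ V(G), and suppose G contains a subtree W rooted at u isomorphic to T_ℓ avoiding a set C with |C| ≤ |V(T)| − |V(T_ℓ)|, where v_i is the vertex of W mapped to j_i. Then one can choose W'_i ∈ SOS_{v_i}(T_{j_i}) for i = 1,…,s, pairwise vertex-disjoint, each avoiding C ∪ {u}, so that the tree obtained by attaching W'_1,…,W'_s to u is a subtree of G rooted at u isomorphic to T_ℓ and avoiding C. -/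
open Classical in
/-- Vertex set of the subtree `T_ℓ` of the tree `T` (on labels `Fin k`, encoded by a parent
function) rooted at `ℓ`: all labels from which iterating `parent` reaches `ℓ`. -/
noncomputable def desc {k : ℕ} (parent : Fin k → Fin k) (ℓ : Fin k) : Finset (Fin k) :=
  Finset.univ.filter (fun j => ∃ n : ℕ, parent^[n] j = ℓ)

/-- `φ` is a subtree of `G` rooted at `u` isomorphic (as a rooted tree) to the subtree
`T_ℓ` of `T`: an injective map on the vertices of `T_ℓ` sending `ℓ` to `u` and edges of
`T_ℓ` to edges of `G`. -/
def IsCopyAt {α : Type*} {k : ℕ} (G : SimpleGraph α) (parent : Fin k → Fin k)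
    (ℓ : Fin k) (u : α) (φ : Fin k → α) : Prop :=
  φ ℓ = u ∧ Set.InjOn φ (desc parent ℓ : Set (Fin k)) ∧
    ∀ j ∈ desc parent ℓ, j ≠ ℓ → G.Adj (φ j) (φ (parent j))

namespace SosGluing

variable {k : ℕ} {parent : Fin k → Fin k} {root ℓ : Fin k}

lemma mem_desc {j ℓ : Fin k} : j ∈ desc parent ℓ ↔ ∃ n : ℕ, parent^[n] j = ℓ := by
  simp [desc]

lemma self_mem_desc (ℓ : Fin k) : ℓ ∈ desc parent ℓ := mem_desc.2 ⟨0, rfl⟩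

lemma eq_root_of_periodic (hroot : parent root = root)
    (hreach : ∀ i : Fin k, ∃ n : ℕ, parent^[n] i = root)
    {p : ℕ} (hp : 1 ≤ p) (h : parent^[p] ℓ = ℓ) : ℓ = root := by
  obtain ⟨N, hN⟩ := hreach ℓ
  have hmul : ∀ m : ℕ, parent^[p * m] ℓ = ℓ := by
    intro m
    induction m with
    | zero => simp
    | succ m ih => rw [Nat.mul_succ, Function.iterate_add_apply, h, ih]
  have h2 : parent^[p * N] ℓ = root := by
    have hle : N ≤ p * N := Nat.le_mul_of_pos_left N hp
    have heq : p * N = (p * N - N) + N := by omega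
    rw [heq, Function.iterate_add_apply, hN, Function.iterate_fixed hroot]
  rw [hmul N] at h2
  exact h2

lemma not_ancestor (hroot : parent root = root)
    (hreach : ∀ i : Fin k, ∃ n : ℕ, parent^[n] i = root)
    {c : Fin k} (hc : parent c = ℓ) (hne : c ≠ ℓ) {n : ℕ}
    (h : parent^[n] ℓ = c) : False := by
  have hper : parent^[n + 1] ℓ = ℓ := by
    rw [Function.iterate_succ_apply', h, hc]
  have hℓ : ℓ = root := eq_root_of_periodic hroot hreach (by omega) hper
  apply hne
  rw [hℓ] at h ⊢
  rw [← h, Function.iterate_fixed hroot]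

lemma mem_desc_of_child (hroot : parent root = root)
    (hreach : ∀ i : Fin k, ∃ n : ℕ, parent^[n] i = root)
    {c j : Fin k} (hc : parent c = ℓ) (hne : c ≠ ℓ)
    (hj : j ∈ desc parent c) : j ∈ desc parent ℓ ∧ j ≠ ℓ := by
  obtain ⟨n, hn⟩ := mem_desc.1 hj
  constructor
  · exact mem_desc.2 ⟨n + 1, by rw [Function.iterate_succ_apply', hn, hc]⟩
  · rintro rfl
    exact not_ancestor hroot hreach hc hne hn

lemma disj_aux (hroot : parent root = root)
    (hreach : ∀ i : Fin k, ∃ n : ℕ, parent^[n] i = root)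
    {c c' j : Fin k} (hc' : parent c' = ℓ) (hne' : c' ≠ ℓ)
    (hcpar : parent c = ℓ) {n m : ℕ} (hnm : n < m) (hn : parent^[n] j = c)
    (hm : parent^[m] j = c') : False := by
  have key : parent^[m - n - 1] ℓ = c' := by
    have h1 : m = (m - n - 1) + (1 + n) := by omega
    rw [h1, Function.iterate_add_apply, Function.iterate_add_apply, hn] at hm
    simpa [hcpar] using hm
  exact not_ancestor hroot hreach hc' hne' key

lemma desc_disjoint (hroot : parent root = root)
    (hreach : ∀ i : Fin k, ∃ n : ℕ, parent^[n] i = root)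
    {c c' : Fin k} (hc : parent c = ℓ) (hnec : c ≠ ℓ)
    (hc' : parent c' = ℓ) (hnec' : c' ≠ ℓ) (hcc : c ≠ c') {j : Fin k}
    (h1 : j ∈ desc parent c) (h2 : j ∈ desc parent c') : False := by
  obtain ⟨n, hn⟩ := mem_desc.1 h1
  obtain ⟨m, hm⟩ := mem_desc.1 h2
  rcases lt_trichotomy n m with h | h | h
  · exact disj_aux hroot hreach hc' hnec' hc h hn hm
  · apply hcc; rw [← hn, ← hm, h]
  · exact disj_aux hroot hreach hc hnec hc' h hm hn

lemma exists_child {j : Fin k} (hj : j ∈ desc parent ℓ) (hne : j ≠ ℓ) :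
    ∃ c : Fin k, parent c = ℓ ∧ c ≠ ℓ ∧ j ∈ desc parent c := by
  classical
  have hex : ∃ n : ℕ, parent^[n] j = ℓ := mem_desc.1 hj
  have hN : parent^[Nat.find hex] j = ℓ := Nat.find_spec hex
  have hN0 : Nat.find hex ≠ 0 := by
    intro h0
    apply hne
    simpa [h0] using hN
  refine ⟨parent^[Nat.find hex - 1] j, ?_, ?_, mem_desc.2 ⟨Nat.find hex - 1, rfl⟩⟩
  · rw [← Function.iterate_succ_apply' parent (Nat.find hex - 1) j]
    have heq : Nat.find hex - 1 + 1 = Nat.find hex := by omega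
    rw [Nat.succ_eq_add_one, heq]; exact hN
  · intro h
    exact Nat.find_min hex (by omega : Nat.find hex - 1 < Nat.find hex) h

lemma parent_mem_desc {c j : Fin k} (hj : j ∈ desc parent c) (hne : j ≠ c) :
    parent j ∈ desc parent c := by
  obtain ⟨n, hn⟩ := mem_desc.1 hj
  cases n with
  | zero => exact absurd hn hne
  | succ n => exact mem_desc.2 ⟨n, by rw [← Function.iterate_succ_apply]; exact hn⟩

noncomputable def childrenSet {k : ℕ} (parent : Fin k → Fin k) (ℓ : Fin k) : Finset (Fin k) :=
  Finset.univ.filter (fun c => parent c = ℓ ∧ c ≠ ℓ)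

lemma mem_childrenSet {c : Fin k} : c ∈ childrenSet parent ℓ ↔ parent c = ℓ ∧ c ≠ ℓ := by
  simp [childrenSet]

open Classical in
noncomputable def avoidSet {α : Type*} {k : ℕ} (parent : Fin k → Fin k) (ℓ : Fin k)
    (C : Finset α) (u : α) (φ : Fin k → α) (Ψ : Fin k → Fin k → α) (c : Fin k) : Finset α :=
  ((C ∪ {u}) ∪ ((childrenSet parent ℓ).filter (fun c' => c'.val < c.val)).biUnion
      (fun c' => (desc parent c').image (Ψ c'))) ∪
    ((childrenSet parent ℓ).filter (fun c' => c.val < c'.val)).biUnion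
      (fun c' => (desc parent c').image φ)

lemma mem_avoidSet {α : Type*} {C : Finset α} {u : α} {φ : Fin k → α}
    {Ψ : Fin k → Fin k → α} {c : Fin k} {x : α} :
    x ∈ avoidSet parent ℓ C u φ Ψ c ↔ x ∈ C ∨ x = u ∨
      (∃ c' ∈ childrenSet parent ℓ, c'.val < c.val ∧ ∃ i ∈ desc parent c', Ψ c' i = x) ∨
      (∃ c' ∈ childrenSet parent ℓ, c.val < c'.val ∧ ∃ i ∈ desc parent c', φ i = x) := by
  classical
  simp only [avoidSet, Finset.mem_union, Finset.mem_biUnion, Finset.mem_filter,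
    Finset.mem_image, Finset.mem_singleton]
  constructor
  · rintro (((h | h) | ⟨c', ⟨hc', hlt⟩, i, hi, hx⟩) | ⟨c', ⟨hc', hlt⟩, i, hi, hx⟩)
    · exact Or.inl h
    · exact Or.inr (Or.inl h)
    · exact Or.inr (Or.inr (Or.inl ⟨c', hc', hlt, i, hi, hx⟩))
    · exact Or.inr (Or.inr (Or.inr ⟨c', hc', hlt, i, hi, hx⟩))
  · rintro (h | h | ⟨c', hc', hlt, i, hi, hx⟩ | ⟨c', hc', hlt, i, hi, hx⟩)
    · exact Or.inl (Or.inl (Or.inl h))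
    · exact Or.inl (Or.inl (Or.inr h))
    · exact Or.inl (Or.inr ⟨c', ⟨hc', hlt⟩, i, hi, hx⟩)
    · exact Or.inr ⟨c', ⟨hc', hlt⟩, i, hi, hx⟩

lemma avoidSet_congr {α : Type*} {C : Finset α} {u : α} {φ : Fin k → α}
    {Ψ Ψ' : Fin k → Fin k → α} {c : Fin k}
    (h : ∀ c' ∈ childrenSet parent ℓ, c'.val < c.val → Ψ c' = Ψ' c') :
    avoidSet parent ℓ C u φ Ψ c = avoidSet parent ℓ C u φ Ψ' c := by
  classical
  unfold avoidSet
  congr 1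
  congr 1
  apply Finset.biUnion_congr rfl
  intro c' hc'
  rw [Finset.mem_filter] at hc'
  rw [h c' hc'.1 hc'.2]

end SosGluing

open SosGluing

/-- The gluing lemma for the deterministic tree-detection algorithm: if the families
`SOS_v(T_j)` satisfy the compact-representation invariant, `ℓ` is a vertex of `T`, and `G`
contains a subtree `φ` rooted at `u` isomorphic to `T_ℓ` and avoiding a set `C` with
`|C| ≤ |V(T)| − |V(T_ℓ)|`, then one can choose, for each child `c` of `ℓ`, a member of
`SOS` at the corresponding vertex, pairwise vertex-disjoint and avoiding `C ∪ {u}`, whose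
gluing at `u` is a subtree of `G` rooted at `u` isomorphic to `T_ℓ` and avoiding `C`. -/
theorem sos_gluing {α : Type*} [Fintype α] (G : SimpleGraph α) {k : ℕ}
    (parent : Fin k → Fin k) (root : Fin k) (hroot : parent root = root)
    (hreach : ∀ i : Fin k, ∃ n : ℕ, parent^[n] i = root)
    (SOS : α → Fin k → Set (Fin k → α))
    (hsound : ∀ (v : α) (j : Fin k), ∀ ψ ∈ SOS v j, IsCopyAt G parent j v ψ)
    (hinv : ∀ (v : α) (j : Fin k) (C : Finset α), C.card ≤ k - (desc parent j).card →
      (∃ ψ, IsCopyAt G parent j v ψ ∧ ∀ i ∈ desc parent j, ψ i ∉ C) →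
      ∃ ψ ∈ SOS v j, ∀ i ∈ desc parent j, ψ i ∉ C)
    (ℓ : Fin k) (u : α) (C : Finset α) (hC : C.card ≤ k - (desc parent ℓ).card)
    (φ : Fin k → α) (hφ : IsCopyAt G parent ℓ u φ)
    (hφC : ∀ i ∈ desc parent ℓ, φ i ∉ C) :
    ∃ Φ : Fin k → α, IsCopyAt G parent ℓ u Φ ∧ (∀ i ∈ desc parent ℓ, Φ i ∉ C) ∧
      ∀ c : Fin k, parent c = ℓ → c ≠ ℓ →
        ∃ ψ ∈ SOS (Φ c) c, (∀ i ∈ desc parent c, Φ i = ψ i) ∧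
          ∀ i ∈ desc parent c, ψ i ∉ C ∧ ψ i ≠ u := by
  classical
  set S : Finset (Fin k) := childrenSet parent ℓ with hSdef
  -- total size of children subtrees
  have hsumS : (∑ c ∈ S, (desc parent c).card) + 1 ≤ (desc parent ℓ).card := by
    have hdisj : ∀ a ∈ S, ∀ b ∈ S, a ≠ b → Disjoint (desc parent a) (desc parent b) := by
      intro a ha b hb hab
      rw [hSdef, mem_childrenSet] at ha hb
      rw [Finset.disjoint_left]
      intro j hja hjb
      exact absurd (desc_disjoint hroot hreach ha.1 ha.2 hb.1 hb.2 hab hja hjb) not_false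
    have hsub : S.biUnion (fun c => desc parent c) ⊆ (desc parent ℓ).erase ℓ := by
      intro j hj
      rw [Finset.mem_biUnion] at hj
      obtain ⟨c, hc, hjc⟩ := hj
      rw [hSdef, mem_childrenSet] at hc
      have h := mem_desc_of_child hroot hreach hc.1 hc.2 hjc
      exact Finset.mem_erase.2 ⟨h.2, h.1⟩
    have h1 := Finset.card_le_card hsub
    rw [Finset.card_biUnion hdisj] at h1
    have h2 : ((desc parent ℓ).erase ℓ).card = (desc parent ℓ).card - 1 :=
      Finset.card_erase_of_mem (self_mem_desc ℓ)
    have h3 : 1 ≤ (desc parent ℓ).card := Finset.card_pos.2 ⟨ℓ, self_mem_desc ℓ⟩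
    omega
  have hdescl_le : (desc parent ℓ).card ≤ k := by
    have h := Finset.card_le_card (Finset.subset_univ (desc parent ℓ))
    simpa using h
  -- cardinality bound on avoid sets
  have hcardC : ∀ (Ψ : Fin k → Fin k → α), ∀ c₀ ∈ S,
      (avoidSet parent ℓ C u φ Ψ c₀).card ≤ k - (desc parent c₀).card := by
    intro Ψ c₀ hc₀
    set A := S.filter (fun c' => c'.val < c₀.val) with hA
    set B := S.filter (fun c' => c₀.val < c'.val) with hB
    have hAB : (∑ c' ∈ A, (desc parent c').card) + (∑ c' ∈ B, (desc parent c').card)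
        + (desc parent c₀).card ≤ ∑ c ∈ S, (desc parent c).card := by
      have hd : Disjoint A B := by
        rw [Finset.disjoint_left]
        intro a ha hb
        rw [hA, Finset.mem_filter] at ha
        rw [hB, Finset.mem_filter] at hb
        omega
      have hd2 : Disjoint (A ∪ B) ({c₀} : Finset (Fin k)) := by
        rw [Finset.disjoint_right]
        intro a ha hb
        rw [Finset.mem_singleton] at ha
        subst ha
        rw [Finset.mem_union, hA, hB, Finset.mem_filter, Finset.mem_filter] at hb
        omega
      have hsub2 : (A ∪ B) ∪ {c₀} ⊆ S := by
        intro a ha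
        rw [Finset.mem_union, Finset.mem_union, Finset.mem_singleton, hA, hB,
          Finset.mem_filter, Finset.mem_filter] at ha
        rcases ha with (h | h) | h
        · exact h.1
        · exact h.1
        · subst h; exact hc₀
      calc (∑ c' ∈ A, (desc parent c').card) + (∑ c' ∈ B, (desc parent c').card)
            + (desc parent c₀).card
          = ∑ c ∈ (A ∪ B) ∪ {c₀}, (desc parent c).card := by
            rw [Finset.sum_union hd2, Finset.sum_union hd, Finset.sum_singleton]
        _ ≤ ∑ c ∈ S, (desc parent c).card := Finset.sum_le_sum_of_subset hsub2
    have hXY : (avoidSet parent ℓ C u φ Ψ c₀).card ≤ (C.card + 1)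
        + (∑ c' ∈ A, (desc parent c').card) + (∑ c' ∈ B, (desc parent c').card) := by
      have e1 : (avoidSet parent ℓ C u φ Ψ c₀).card ≤
          ((C ∪ {u}) ∪ A.biUnion (fun c' => (desc parent c').image (Ψ c'))).card
          + (B.biUnion (fun c' => (desc parent c').image φ)).card := by
        rw [avoidSet]
        exact Finset.card_union_le _ _
      have e2 : ((C ∪ {u}) ∪ A.biUnion (fun c' => (desc parent c').image (Ψ c'))).card ≤
          (C ∪ {u}).card + (A.biUnion (fun c' => (desc parent c').image (Ψ c'))).card :=
        Finset.card_union_le _ _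
      have e3 : (C ∪ {u}).card ≤ C.card + 1 := by
        refine le_trans (Finset.card_union_le _ _) ?_
        simp
      have e4 : (A.biUnion (fun c' => (desc parent c').image (Ψ c'))).card ≤
          ∑ c' ∈ A, (desc parent c').card :=
        le_trans (Finset.card_biUnion_le) (Finset.sum_le_sum fun c' _ => Finset.card_image_le)
      have e5 : (B.biUnion (fun c' => (desc parent c').image φ)).card ≤
          ∑ c' ∈ B, (desc parent c').card :=
        le_trans (Finset.card_biUnion_le) (Finset.sum_le_sum fun c' _ => Finset.card_image_le)
      omega
    omega
  -- the greedy construction of the family Ψ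
  have claim : ∀ m : ℕ, ∃ Ψ : Fin k → Fin k → α,
      ∀ c ∈ S, c.val < m →
        Ψ c ∈ SOS (φ c) c ∧ ∀ i ∈ desc parent c, Ψ c i ∉ avoidSet parent ℓ C u φ Ψ c := by
    intro m
    induction m with
    | zero => exact ⟨fun _ _ => u, fun c _ hc => absurd hc (Nat.not_lt_zero _)⟩
    | succ m ih =>
      obtain ⟨Ψ, hΨ⟩ := ih
      by_cases hm : ∃ c₀ ∈ S, c₀.val = m
      · obtain ⟨c₀, hc₀S, hc₀m⟩ := hm
        have hc₀ : parent c₀ = ℓ ∧ c₀ ≠ ℓ := by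
          rw [hSdef, mem_childrenSet] at hc₀S; exact hc₀S
        have hc₀S' : c₀ ∈ S := hc₀S
        have hwitcopy : IsCopyAt G parent c₀ (φ c₀) φ := by
          refine ⟨rfl, ?_, ?_⟩
          · intro a ha b hb hab
            have ha' := (mem_desc_of_child hroot hreach hc₀.1 hc₀.2 (Finset.mem_coe.1 ha)).1
            have hb' := (mem_desc_of_child hroot hreach hc₀.1 hc₀.2 (Finset.mem_coe.1 hb)).1
            exact hφ.2.1 (Finset.mem_coe.2 ha') (Finset.mem_coe.2 hb') hab
          · intro j hj hjne
            obtain ⟨h1, h2⟩ := mem_desc_of_child hroot hreach hc₀.1 hc₀.2 hj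
            exact hφ.2.2 j h1 h2
        have hwit : ∀ i ∈ desc parent c₀, φ i ∉ avoidSet parent ℓ C u φ Ψ c₀ := by
          intro i hi
          obtain ⟨hiℓ, hineℓ⟩ := mem_desc_of_child hroot hreach hc₀.1 hc₀.2 hi
          rw [mem_avoidSet]
          push_neg
          refine ⟨hφC i hiℓ, ?_, ?_, ?_⟩
          · intro h
            apply hineℓ
            exact hφ.2.1 (Finset.mem_coe.2 hiℓ) (Finset.mem_coe.2 (self_mem_desc ℓ))
              (h.trans hφ.1.symm)
          · intro c' hc'S hlt i' hi'
            have hprev := (hΨ c' hc'S (by omega)).2 i' hi'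
            rw [mem_avoidSet] at hprev
            push_neg at hprev
            intro heq
            exact hprev.2.2.2 c₀ hc₀S' (by omega) i hi heq.symm
          · intro c' hc'S hlt i' hi'
            have hc' : parent c' = ℓ ∧ c' ≠ ℓ := mem_childrenSet.1 hc'S
            intro heq
            have hii' : i' = i := by
              have h1 := (mem_desc_of_child hroot hreach hc'.1 hc'.2 hi').1
              exact hφ.2.1 (Finset.mem_coe.2 h1) (Finset.mem_coe.2 hiℓ) heq
            subst hii'
            have hne : c₀ ≠ c' := by
              intro h; rw [h] at hlt; omega
            exact desc_disjoint hroot hreach hc₀.1 hc₀.2 hc'.1 hc'.2 hne hi hi'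
        obtain ⟨ψ, hψSOS, hψav⟩ := hinv (φ c₀) c₀ (avoidSet parent ℓ C u φ Ψ c₀)
          (hcardC Ψ c₀ hc₀S') ⟨φ, hwitcopy, hwit⟩
        refine ⟨Function.update Ψ c₀ ψ, ?_⟩
        intro c hcS hclt
        have hagree : ∀ c' ∈ childrenSet parent ℓ, c'.val < c.val →
            Function.update Ψ c₀ ψ c' = Ψ c' := by
          intro c' _ hlt
          apply Function.update_of_ne
          intro h
          rw [h] at hlt
          omega
        have hAeq : avoidSet parent ℓ C u φ (Function.update Ψ c₀ ψ) c
            = avoidSet parent ℓ C u φ Ψ c := avoidSet_congr hagree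
        by_cases hcc : c = c₀
        · subst hcc
          rw [Function.update_self]
          refine ⟨hψSOS, fun i hi => ?_⟩
          rw [hAeq]
          exact hψav i hi
        · have hlt' : c.val < m := by
            have hne : c.val ≠ m := by
              intro h
              exact hcc (Fin.ext (h.trans hc₀m.symm))
            omega
          have h1 := hΨ c hcS hlt'
          rw [Function.update_of_ne hcc]
          refine ⟨h1.1, fun i hi => ?_⟩
          rw [hAeq]
          exact h1.2 i hi
      · refine ⟨Ψ, fun c hc hlt => hΨ c hc ?_⟩
        have : c.val ≠ m := fun h => hm ⟨c, hc, h⟩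
        omega
  obtain ⟨Ψ, hΨ⟩ := claim k
  -- unpack the properties of Ψ
  have hΨall : ∀ c : Fin k, parent c = ℓ → c ≠ ℓ →
      Ψ c ∈ SOS (φ c) c ∧ ∀ i ∈ desc parent c, Ψ c i ∉ C ∧ Ψ c i ≠ u ∧
        ∀ c' : Fin k, parent c' = ℓ → c' ≠ ℓ → c'.val < c.val →
          ∀ i' ∈ desc parent c', Ψ c i ≠ Ψ c' i' := by
    intro c hc hne
    have hcS : c ∈ S := by rw [hSdef, mem_childrenSet]; exact ⟨hc, hne⟩
    obtain ⟨hmem, hav⟩ := hΨ c hcS c.isLt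
    refine ⟨hmem, fun i hi => ?_⟩
    have h := hav i hi
    rw [mem_avoidSet] at h
    push_neg at h
    refine ⟨h.1, h.2.1, fun c' h1 h2 h3 i' hi' => ?_⟩
    have hc'S : c' ∈ childrenSet parent ℓ := mem_childrenSet.2 ⟨h1, h2⟩
    intro heq
    exact h.2.2.1 c' hc'S h3 i' hi' heq.symm
  have hcopy : ∀ c : Fin k, parent c = ℓ → c ≠ ℓ → IsCopyAt G parent c (φ c) (Ψ c) :=
    fun c hc hne => hsound (φ c) c (Ψ c) (hΨall c hc hne).1
  -- the child selector
  have hex : ∀ j : Fin k, ∃ c : Fin k, j ∈ desc parent ℓ → j ≠ ℓ →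
      parent c = ℓ ∧ c ≠ ℓ ∧ j ∈ desc parent c := by
    intro j
    by_cases h : j ∈ desc parent ℓ ∧ j ≠ ℓ
    · obtain ⟨c, hc⟩ := exists_child h.1 h.2
      exact ⟨c, fun _ _ => hc⟩
    · exact ⟨ℓ, fun h1 h2 => absurd ⟨h1, h2⟩ h⟩
  choose χ hχ using hex
  have hχuniq : ∀ c : Fin k, parent c = ℓ → c ≠ ℓ → ∀ j ∈ desc parent c, χ j = c := by
    intro c hc hne j hj
    obtain ⟨hjℓ, hjne⟩ := mem_desc_of_child hroot hreach hc hne hj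
    obtain ⟨h1, h2, h3⟩ := hχ j hjℓ hjne
    by_contra hne2
    exact desc_disjoint hroot hreach h1 h2 hc hne hne2 h3 hj
  -- the glued map
  set Φ : Fin k → α := fun j => if j ∈ desc parent ℓ ∧ j ≠ ℓ then Ψ (χ j) j else u with hΦdef
  have hΦeq : ∀ j : Fin k, j ∈ desc parent ℓ → j ≠ ℓ → Φ j = Ψ (χ j) j := by
    intro j h1 h2
    rw [hΦdef]
    simp only []
    rw [if_pos ⟨h1, h2⟩]
  have hΦℓ : Φ ℓ = u := by
    rw [hΦdef]
    simp only []
    rw [if_neg]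
    simp
  have hΦc : ∀ c : Fin k, parent c = ℓ → c ≠ ℓ → ∀ i ∈ desc parent c, Φ i = Ψ c i := by
    intro c hc hne i hi
    obtain ⟨h1, h2⟩ := mem_desc_of_child hroot hreach hc hne hi
    rw [hΦeq i h1 h2, hχuniq c hc hne i hi]
  refine ⟨Φ, ⟨hΦℓ, ?_, ?_⟩, ?_, ?_⟩
  · -- injectivity
    intro a ha b hb hab
    have ha' : a ∈ desc parent ℓ := Finset.mem_coe.1 ha
    have hb' : b ∈ desc parent ℓ := Finset.mem_coe.1 hb
    by_cases haℓ : a = ℓ <;> by_cases hbℓ : b = ℓ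
    · rw [haℓ, hbℓ]
    · exfalso
      subst haℓ
      rw [hΦℓ, hΦeq b hb' hbℓ] at hab
      obtain ⟨h1, h2, h3⟩ := hχ b hb' hbℓ
      exact ((hΨall (χ b) h1 h2).2 b h3).2.1 hab.symm
    · exfalso
      subst hbℓ
      rw [hΦℓ, hΦeq a ha' haℓ] at hab
      obtain ⟨h1, h2, h3⟩ := hχ a ha' haℓ
      exact ((hΨall (χ a) h1 h2).2 a h3).2.1 hab
    · obtain ⟨ha1, ha2, ha3⟩ := hχ a ha' haℓ
      obtain ⟨hb1, hb2, hb3⟩ := hχ b hb' hbℓ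
      rw [hΦeq a ha' haℓ, hΦeq b hb' hbℓ] at hab
      by_cases hcc : χ a = χ b
      · have hinj := (hcopy (χ a) ha1 ha2).2.1
        apply hinj (Finset.mem_coe.2 ha3) (Finset.mem_coe.2 (hcc ▸ hb3))
        rw [hcc] at hab ⊢
        exact hab
      · exfalso
        rcases lt_or_gt_of_ne (fun h => hcc (Fin.ext h) : (χ a).val ≠ (χ b).val) with h | h
        · exact ((hΨall (χ b) hb1 hb2).2 b hb3).2.2 (χ a) ha1 ha2 h a ha3 hab.symm
        · exact ((hΨall (χ a) ha1 ha2).2 a ha3).2.2 (χ b) hb1 hb2 h b hb3 hab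
  · -- edges
    intro j hj hjne
    obtain ⟨h1, h2, h3⟩ := hχ j hj hjne
    by_cases hjc : j = χ j
    · have hpj : parent j = ℓ := by rw [hjc]; exact h1
      rw [hpj, hΦℓ, hΦeq j hj hjne]
      have hr : Ψ (χ j) (χ j) = φ (χ j) := (hcopy (χ j) h1 h2).1
      rw [← hjc] at hr
      rw [← hjc, hr, ← hφ.1]
      exact hpj ▸ hφ.2.2 j hj hjne
    · have hpm : parent j ∈ desc parent (χ j) := parent_mem_desc h3 hjc
      obtain ⟨hp1, hp2⟩ := mem_desc_of_child hroot hreach h1 h2 hpm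
      rw [hΦeq j hj hjne, hΦeq (parent j) hp1 hp2, hχuniq (χ j) h1 h2 (parent j) hpm]
      exact (hcopy (χ j) h1 h2).2.2 j h3 hjc
  · -- avoid C
    intro i hi
    by_cases hiℓ : i = ℓ
    · subst hiℓ
      rw [hΦℓ, ← hφ.1]
      exact hφC i (self_mem_desc i)
    · obtain ⟨h1, h2, h3⟩ := hχ i hi hiℓ
      rw [hΦeq i hi hiℓ, hχuniq (χ i) h1 h2 i h3]
      exact ((hΨall (χ i) h1 h2).2 i h3).1
  · -- children clause
    intro c hc hne
    have hΦcc : Φ c = φ c := by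
      rw [hΦc c hc hne c (self_mem_desc c)]
      exact (hcopy c hc hne).1
    refine ⟨Ψ c, ?_, hΦc c hc hne, ?_⟩
    · rw [hΦcc]
      exact (hΨall c hc hne).1
    · intro i hi
      exact ⟨((hΨall c hc hne).2 i hi).1, ((hΨall c hc hne).2 i hi).2.1⟩
end

section
/- Let T be a tree on k vertices rooted at r and G a finite graph. Define families SOS_u(T_ℓ) for u ∈ V(G) and ℓ ∈ V(T) by induction on depth(T_ℓ): for a leaf ℓ, SOS_u(T_ℓ) = {({u}, ∅)} (the single-vertex tree at u); for internal ℓ with children j₁,…,j_s, first collect all trees formed by gluing pairwise-disjoint members W_i ∈ SOS_{v_i}(T_{j_i}) (with v_i ∈ N(u), and all W_i avoiding u) to the root u, and then replace the collection by any compact (|V(T_ℓ)|, k − |V(T_ℓ)|)-representation of it. Then G contains a subgraph isomorphic to T if and only if SOS_u(T_r) ≠ ∅ for some vertex u of G. -/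
section Helpers

variable {k : ℕ} {parent : Fin k → Fin k}

lemma mem_desc' {j ℓ : Fin k} : j ∈ desc parent ℓ ↔ ∃ n : ℕ, parent^[n] j = ℓ := by
  simp [desc]

lemma self_mem_desc' (ℓ : Fin k) : ℓ ∈ desc parent ℓ := mem_desc'.mpr ⟨0, rfl⟩

variable {root : Fin k} (hroot : parent root = root)
  (hreach : ∀ i : Fin k, ∃ n : ℕ, parent^[n] i = root)

include hroot hreach in
lemma cycle_eq_root' {x : Fin k} {n : ℕ} (hn : 1 ≤ n) (hx : parent^[n] x = x) :
    x = root := by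
  obtain ⟨m, hm⟩ := hreach x
  have h1 : parent^[n * m] x = x := by
    rw [Function.iterate_mul]; exact Function.iterate_fixed hx m
  have hle : m ≤ n * m := Nat.le_mul_of_pos_left m hn
  have h2 : parent^[(n * m - m) + m] x = x := by rwa [Nat.sub_add_cancel hle]
  rw [Function.iterate_add_apply, hm, Function.iterate_fixed hroot] at h2
  exact h2.symm

include hroot hreach in
lemma notMem_desc_child' {ℓ c : Fin k} (hc : parent c = ℓ) (hne : c ≠ ℓ) :
    ℓ ∉ desc parent c := by
  intro h
  obtain ⟨n, hn⟩ := mem_desc'.mp h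
  have hcyc : parent^[n + 1] c = c := by
    rw [Function.iterate_succ_apply, hc, hn]
  have hcr : c = root := cycle_eq_root' hroot hreach (Nat.le_add_left 1 n) hcyc
  exact hne (by rw [← hc, hcr, hroot])

lemma desc_child_subset' {ℓ c : Fin k} (hc : parent c = ℓ) :
    desc parent c ⊆ desc parent ℓ := by
  intro j hj
  obtain ⟨n, hn⟩ := mem_desc'.mp hj
  exact mem_desc'.mpr ⟨n + 1, by rw [Function.iterate_succ_apply', hn, hc]⟩

lemma parent_mem_desc_of_ne' {c j : Fin k} (hj : j ∈ desc parent c) (hne : j ≠ c) :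
    parent j ∈ desc parent c := by
  obtain ⟨n, hn⟩ := mem_desc'.mp hj
  cases n with
  | zero => exact absurd hn hne
  | succ m => exact mem_desc'.mpr ⟨m, by rwa [Function.iterate_succ_apply] at hn⟩

lemma mem_desc_of_parent_mem' {c j : Fin k} (hj : parent j ∈ desc parent c) :
    j ∈ desc parent c := by
  obtain ⟨n, hn⟩ := mem_desc'.mp hj
  exact mem_desc'.mpr ⟨n + 1, by rwa [Function.iterate_succ_apply]⟩

include hroot hreach in
lemma children_aux' {ℓ c₁ c₂ x : Fin k} (h1 : parent c₁ = ℓ) (h2 : parent c₂ = ℓ)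
    (hn2 : c₂ ≠ ℓ) {m n : ℕ} (hmn : m ≤ n) (hx1 : parent^[m] x = c₁)
    (hx2 : parent^[n] x = c₂) : c₁ = c₂ := by
  have h3 : parent^[n - m] c₁ = c₂ := by
    rw [← hx1, ← Function.iterate_add_apply, Nat.sub_add_cancel hmn, hx2]
  rcases Nat.eq_zero_or_pos (n - m) with h0 | hp
  · rw [h0] at h3; exact h3
  · exfalso
    obtain ⟨t, ht⟩ := Nat.exists_eq_add_of_le hp
    rw [ht, Nat.add_comm, Function.iterate_add_apply] at h3
    simp only [Function.iterate_one] at h3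
    rw [h1] at h3
    have hcyc : parent^[t + 1] ℓ = ℓ := by
      rw [Function.iterate_succ_apply', h3, h2]
    have hlr : ℓ = root := cycle_eq_root' hroot hreach (Nat.le_add_left 1 t) hcyc
    apply hn2
    rw [← h3, hlr, Function.iterate_fixed hroot]

include hroot hreach in
lemma desc_children_disjoint' {ℓ c₁ c₂ : Fin k} (h1 : parent c₁ = ℓ) (h2 : parent c₂ = ℓ)
    (hn1 : c₁ ≠ ℓ) (hn2 : c₂ ≠ ℓ) (hne : c₁ ≠ c₂) :
    Disjoint (desc parent c₁) (desc parent c₂) := by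
  rw [Finset.disjoint_left]
  intro x hx1 hx2
  obtain ⟨m, hm⟩ := mem_desc'.mp hx1
  obtain ⟨n, hn⟩ := mem_desc'.mp hx2
  rcases le_total m n with h | h
  · exact hne (children_aux' hroot hreach h1 h2 hn2 h hm hn)
  · exact hne (children_aux' hroot hreach h2 h1 hn1 h hn hm).symm

end Helpers

/-- Correctness of the deterministic tree-detection algorithm. Suppose the families
`SOS_u(T_ℓ)` are built inductively: every stored element is a copy of `T_ℓ` at `u` glued
from members of the children's families, and each family is a compact
`(|V(T_ℓ)|, k − |V(T_ℓ)|)`-representation of the family of all such glued copies. Then `G`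
contains a subgraph isomorphic to `T` iff `SOS_u(T_r) ≠ ∅` for some vertex `u`. -/
theorem tree_detection_correct {α : Type*} [Fintype α] (G : SimpleGraph α) {k : ℕ}
    (parent : Fin k → Fin k) (root : Fin k) (hroot : parent root = root)
    (hreach : ∀ i : Fin k, ∃ n : ℕ, parent^[n] i = root)
    (SOS : α → Fin k → Set (Fin k → α))
    (hsub : ∀ (u : α) (ℓ : Fin k), ∀ ψ ∈ SOS u ℓ, IsCopyAt G parent ℓ u ψ ∧
      ∀ c : Fin k, parent c = ℓ → c ≠ ℓ →
        ∃ ψ' ∈ SOS (ψ c) c, ∀ i ∈ desc parent c, ψ i = ψ' i)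
    (hcompact : ∀ (u : α) (ℓ : Fin k) (C : Finset α),
      C.card ≤ k - (desc parent ℓ).card →
      (∃ ψ : Fin k → α, (IsCopyAt G parent ℓ u ψ ∧
          ∀ c : Fin k, parent c = ℓ → c ≠ ℓ →
            ∃ ψ' ∈ SOS (ψ c) c, ∀ i ∈ desc parent c, ψ i = ψ' i) ∧
          ∀ i ∈ desc parent ℓ, ψ i ∉ C) →
      ∃ ψ ∈ SOS u ℓ, ∀ i ∈ desc parent ℓ, ψ i ∉ C) :
    (∃ φ : Fin k → α, IsCopyAt G parent root (φ root) φ) ↔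
      ∃ u : α, (SOS u root).Nonempty := by
  classical
  constructor
  · rintro ⟨φ, hφ⟩
    -- main claim, by strong induction on the size of the subtree
    have key : ∀ n (ℓ : Fin k), (desc parent ℓ).card ≤ n → ∀ (u : α) (C : Finset α)
        (φ : Fin k → α), C.card ≤ k - (desc parent ℓ).card → IsCopyAt G parent ℓ u φ →
        (∀ i ∈ desc parent ℓ, φ i ∉ C) → ∃ ψ ∈ SOS u ℓ, ∀ i ∈ desc parent ℓ, ψ i ∉ C := by
      intro n
      induction n with
      | zero =>
        intro ℓ hcard
        exfalso
        have := Finset.card_pos.mpr ⟨ℓ, self_mem_desc' (parent := parent) ℓ⟩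
        omega
      | succ n ih =>
        intro ℓ hcard u C φ hC hφcopy hφC
        -- inner induction: process children one by one
        have inner : ∀ S : Finset (Fin k), (∀ c ∈ S, parent c = ℓ ∧ c ≠ ℓ) →
            ∃ ψ : Fin k → α, (IsCopyAt G parent ℓ u ψ ∧ (∀ i ∈ desc parent ℓ, ψ i ∉ C)) ∧
              ∀ c ∈ S, ∃ ψ' ∈ SOS (ψ c) c, ∀ i ∈ desc parent c, ψ i = ψ' i := by
          intro S
          induction S using Finset.induction with
          | empty => exact fun _ => ⟨φ, ⟨hφcopy, hφC⟩, by simp⟩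
          | @insert c S hcS ihS =>
            intro hSch
            obtain ⟨hcℓ, hcneℓ⟩ := hSch c (Finset.mem_insert_self c S)
            obtain ⟨ψ, ⟨hψcopy, hψC⟩, hψch⟩ :=
              ihS fun c' hc' => hSch c' (Finset.mem_insert_of_mem hc')
            have hsubd : desc parent c ⊆ desc parent ℓ := desc_child_subset' hcℓ
            have hℓnot : ℓ ∉ desc parent c := notMem_desc_child' hroot hreach hcℓ hcneℓ
            have hcmem : c ∈ desc parent ℓ :=
              mem_desc'.mpr ⟨1, by simp [hcℓ]⟩
            have hlt : (desc parent c).card < (desc parent ℓ).card :=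
              Finset.card_lt_card ⟨hsubd, fun hh => hℓnot (hh (self_mem_desc' ℓ))⟩
            set C' : Finset α := C ∪ (desc parent ℓ \ desc parent c).image ψ with hC'def
            have hkk : (desc parent ℓ).card ≤ k := by
              simpa using Finset.card_le_univ (desc parent ℓ)
            have hC'card : C'.card ≤ k - (desc parent c).card := by
              have h1 : C'.card ≤ C.card + ((desc parent ℓ \ desc parent c).image ψ).card :=
                Finset.card_union_le _ _
              have h2 : ((desc parent ℓ \ desc parent c).image ψ).card ≤
                  (desc parent ℓ \ desc parent c).card := Finset.card_image_le
              have h3 : (desc parent ℓ \ desc parent c).card =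
                  (desc parent ℓ).card - (desc parent c).card := Finset.card_sdiff_of_subset hsubd
              omega
            -- ψ restricted is a copy at c
            have hψccopy : IsCopyAt G parent c (ψ c) ψ := by
              refine ⟨rfl, hψcopy.2.1.mono (Finset.coe_subset.mpr hsubd), ?_⟩
              intro j hj hjne
              exact hψcopy.2.2 j (hsubd hj) (fun h => hℓnot (h ▸ hj))
            have hψavoid : ∀ i ∈ desc parent c, ψ i ∉ C' := by
              intro i hi
              simp only [hC'def, Finset.mem_union, Finset.mem_image, not_or, not_exists]
              refine ⟨hψC i (hsubd hi), ?_⟩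
              rintro j ⟨hjm, hij⟩
              rw [Finset.mem_sdiff] at hjm
              exact hjm.2 (hψcopy.2.1 (Finset.mem_coe.mpr hjm.1)
                (Finset.mem_coe.mpr (hsubd hi)) hij ▸ hi)
            obtain ⟨ψ'', hψ''S, hψ''C⟩ :=
              ih c (by omega) (ψ c) C' ψ hC'card hψccopy hψavoid
            have hψ''copy : IsCopyAt G parent c (ψ c) ψ'' := (hsub _ _ _ hψ''S).1
            -- glue
            set ψn : Fin k → α := fun i => if i ∈ desc parent c then ψ'' i else ψ i
              with hψndef
            have hon : ∀ i ∈ desc parent c, ψn i = ψ'' i := fun i hi => by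
              simp [hψndef, hi]
            have hoff : ∀ i, i ∉ desc parent c → ψn i = ψ i := fun i hi => by
              simp [hψndef, hi]
            have hsep : ∀ a ∈ desc parent c, ∀ b ∈ desc parent ℓ, b ∉ desc parent c →
                ψ'' a ≠ ψ b := by
              intro a ha b hb hbn h
              apply hψ''C a ha
              simp only [hC'def, Finset.mem_union]
              exact Or.inr (Finset.mem_image.mpr ⟨b, Finset.mem_sdiff.mpr ⟨hb, hbn⟩, h.symm⟩)
            have hψncopy : IsCopyAt G parent ℓ u ψn := by
              refine ⟨?_, ?_, ?_⟩
              · rw [hoff ℓ hℓnot]; exact hψcopy.1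
              · intro a ha b hb hab
                have ha' : a ∈ desc parent ℓ := Finset.mem_coe.mp ha
                have hb' : b ∈ desc parent ℓ := Finset.mem_coe.mp hb
                by_cases hac : a ∈ desc parent c <;> by_cases hbc : b ∈ desc parent c
                · rw [hon a hac, hon b hbc] at hab
                  exact hψ''copy.2.1 (Finset.mem_coe.mpr hac) (Finset.mem_coe.mpr hbc) hab
                · rw [hon a hac, hoff b hbc] at hab
                  exact absurd hab (hsep a hac b hb' hbc)
                · rw [hoff a hac, hon b hbc] at hab
                  exact absurd hab.symm (hsep b hbc a ha' hac)
                · rw [hoff a hac, hoff b hbc] at hab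
                  exact hψcopy.2.1 ha hb hab
              · intro j hj hjℓ
                by_cases hjc : j ∈ desc parent c
                · by_cases hjc' : j = c
                  · subst hjc'
                    rw [hon j hjc, hψ''copy.1, hcℓ, hoff ℓ hℓnot]
                    have := hψcopy.2.2 j hcmem hcneℓ
                    rwa [hcℓ] at this
                  · have hpj : parent j ∈ desc parent c := parent_mem_desc_of_ne' hjc hjc'
                    rw [hon j hjc, hon _ hpj]
                    exact hψ''copy.2.2 j hjc hjc'
                · have hpj : parent j ∉ desc parent c :=
                    fun h => hjc (mem_desc_of_parent_mem' h)
                  rw [hoff j hjc, hoff _ hpj]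
                  exact hψcopy.2.2 j hj hjℓ
            have hψnC : ∀ i ∈ desc parent ℓ, ψn i ∉ C := by
              intro i hi
              by_cases hic : i ∈ desc parent c
              · rw [hon i hic]
                intro h
                exact hψ''C i hic (by simp [hC'def, h])
              · rw [hoff i hic]; exact hψC i hi
            refine ⟨ψn, ⟨hψncopy, hψnC⟩, ?_⟩
            intro c' hc'
            rcases Finset.mem_insert.mp hc' with hc'c | hc'S
            · subst hc'c
              refine ⟨ψ'', ?_, hon⟩
              rw [hon c' (self_mem_desc' c'), hψ''copy.1]
              exact hψ''S
            · obtain ⟨hc'ℓ, hc'ne⟩ := hSch c' (Finset.mem_insert_of_mem hc'S)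
              obtain ⟨ψ₂, hψ₂S, hψ₂agree⟩ := hψch c' hc'S
              have hne : c' ≠ c := fun h => hcS (h ▸ hc'S)
              have hdisj := desc_children_disjoint' hroot hreach hc'ℓ hcℓ hc'ne hcneℓ hne
              have hnotin : ∀ i ∈ desc parent c', i ∉ desc parent c :=
                fun i hi => Finset.disjoint_left.mp hdisj hi
              refine ⟨ψ₂, ?_, ?_⟩
              · rw [hoff c' (hnotin c' (self_mem_desc' c'))]
                exact hψ₂S
              · intro i hi
                rw [hoff i (hnotin i hi)]
                exact hψ₂agree i hi
        obtain ⟨ψ, ⟨hψcopy, hψC⟩, hψch⟩ :=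
          inner (Finset.univ.filter fun c => parent c = ℓ ∧ c ≠ ℓ)
            (fun c hc => by simpa using hc)
        exact hcompact u ℓ C hC
          ⟨ψ, ⟨hψcopy, fun c hc hcne => hψch c (by simp [hc, hcne])⟩, hψC⟩
    have hdroot : desc parent root = Finset.univ :=
      Finset.eq_univ_iff_forall.mpr fun i => mem_desc'.mpr (hreach i)
    have hcardroot : (desc parent root).card = k := by simp [hdroot]
    obtain ⟨ψ, hψ, _⟩ := key (desc parent root).card root le_rfl (φ root) ∅ φ
      (by simp) hφ (by simp)
    exact ⟨φ root, ψ, hψ⟩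
  · rintro ⟨u, ψ, hψ⟩
    have h := (hsub u root ψ hψ).1
    exact ⟨ψ, by rw [h.1]; exact h⟩
end

section
/- Let T be a rooted tree on k vertices of depth d, and let G be a graph with a distinguished edge e = {x,y}. Suppose H is the graph formed by e, T, and a set 𝓔 of edges between {x,y} and V(T). In G, restrict the inductive construction of SOS_u(T_ℓ) so that a subtree rooted at u with shape T_ℓ is kept only if ({ℓ,x} ∈ 𝓔 implies {u,x} ∈ E(G)) and ({ℓ,y} ∈ 𝓔 implies {u,y} ∈ E(G)) for every vertex of the subtree and its corresponding shape vertex. Then some vertex u of G has nonempty restricted SOS_u(T_r) if and only if G contains a subgraph isomorphic to H in which the distinguished edge of H is mapped onto e (respecting the orientation x ↦ x, y ↦ y). -/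
/-- The restriction filter for detecting `H = (f, T, 𝓔)` anchored at the fixed edge
`e = {x,y}` of `G`: every vertex of the stored subtree must be adjacent to `x`
(resp. `y`) whenever its shape vertex is joined to `x` (resp. `y`) in `𝓔`, and must avoid
`x` and `y`. -/
def RestrOk {α : Type*} {k : ℕ} (G : SimpleGraph α) (parent : Fin k → Fin k)
    (x y : α) (Ex Ey : Fin k → Prop) (ℓ : Fin k) (φ : Fin k → α) : Prop :=
  ∀ i ∈ desc parent ℓ,
    (Ex i → G.Adj (φ i) x) ∧ (Ey i → G.Adj (φ i) y) ∧ φ i ≠ x ∧ φ i ≠ y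

namespace TreeAux

variable {k : ℕ} {parent : Fin k → Fin k} {root : Fin k}

lemma mem_desc {j ℓ : Fin k} : j ∈ desc parent ℓ ↔ ∃ n : ℕ, parent^[n] j = ℓ := by
  simp [desc]

lemma mem_desc_self (ℓ : Fin k) : ℓ ∈ desc parent ℓ := mem_desc.mpr ⟨0, rfl⟩

lemma desc_subset_child {c ℓ : Fin k} (hc : parent c = ℓ) :
    desc parent c ⊆ desc parent ℓ := by
  intro j hj
  obtain ⟨n, hn⟩ := mem_desc.mp hj
  exact mem_desc.mpr ⟨n + 1, by rw [Function.iterate_succ_apply', hn, hc]⟩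

lemma periodic_eq_root (hroot : parent root = root)
    (hreach : ∀ i : Fin k, ∃ n : ℕ, parent^[n] i = root)
    {j : Fin k} {n : ℕ} (h : parent^[n + 1] j = j) : j = root := by
  obtain ⟨m, hm⟩ := hreach j
  have hper : ∀ t : ℕ, parent^[t * (n + 1)] j = j := by
    intro t
    induction t with
    | zero => simp
    | succ t ih => rw [Nat.succ_mul, Function.iterate_add_apply, h, ih]
  have h2 : parent^[m * n + m] j = root := by
    rw [Function.iterate_add_apply, hm, Function.iterate_fixed hroot]
  have h3 : m * (n + 1) = m * n + m := by ring
  calc j = parent^[m * (n + 1)] j := (hper m).symm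
    _ = root := by rw [h3, h2]

lemma ell_not_mem_desc_child (hroot : parent root = root)
    (hreach : ∀ i : Fin k, ∃ n : ℕ, parent^[n] i = root)
    {c ℓ : Fin k} (hc : parent c = ℓ) (hne : c ≠ ℓ) : ℓ ∉ desc parent c := by
  intro h
  obtain ⟨n, hn⟩ := mem_desc.mp h
  have hper : parent^[n + 1] ℓ = ℓ := by
    rw [Function.iterate_succ_apply', hn, hc]
  have hℓ : ℓ = root := periodic_eq_root hroot hreach hper
  apply hne
  rw [← hn, hℓ, Function.iterate_fixed hroot]

private lemma disjoint_aux (hroot : parent root = root)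
    (hreach : ∀ i : Fin k, ∃ n : ℕ, parent^[n] i = root)
    {c c' ℓ : Fin k} (hc : parent c = ℓ) (hc' : parent c' = ℓ)
    (h1' : c' ≠ ℓ) (hne : c ≠ c') {j : Fin k} {n m : ℕ}
    (hn : parent^[n] j = c) (hm : parent^[m] j = c') (hle : n ≤ m) : False := by
  have hd : parent^[m - n] c = c' := by
    rw [← hn, ← Function.iterate_add_apply, Nat.sub_add_cancel hle, hm]
  rcases Nat.eq_zero_or_pos (m - n) with h0 | hpos
  · rw [h0] at hd; exact hne hd
  · obtain ⟨d, hd1⟩ : ∃ d, m - n = d + 1 := ⟨m - n - 1, by omega⟩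
    rw [hd1] at hd
    have hdl : parent^[d] ℓ = c' := by
      rw [← hc, ← Function.iterate_succ_apply, hd]
    have hper : parent^[d + 1] ℓ = ℓ := by
      rw [Function.iterate_succ_apply', hdl, hc']
    have hℓ : ℓ = root := periodic_eq_root hroot hreach hper
    apply h1'
    rw [← hdl, hℓ, Function.iterate_fixed hroot]

lemma desc_child_disjoint (hroot : parent root = root)
    (hreach : ∀ i : Fin k, ∃ n : ℕ, parent^[n] i = root)
    {c c' ℓ : Fin k} (hc : parent c = ℓ) (hc' : parent c' = ℓ)
    (h1 : c ≠ ℓ) (h1' : c' ≠ ℓ) (hne : c ≠ c') :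
    Disjoint (desc parent c) (desc parent c') := by
  rw [Finset.disjoint_left]
  intro j hj hj'
  obtain ⟨n, hn⟩ := mem_desc.mp hj
  obtain ⟨m, hm⟩ := mem_desc.mp hj'
  rcases le_total n m with h | h
  · exact disjoint_aux hroot hreach hc hc' h1' hne hn hm h
  · exact disjoint_aux hroot hreach hc' hc h1 hne.symm hm hn h

lemma parent_mem_desc {c i : Fin k} (hi : i ∈ desc parent c) (hne : i ≠ c) :
    parent i ∈ desc parent c := by
  obtain ⟨n, hn⟩ := mem_desc.mp hi
  rcases Nat.eq_zero_or_pos n with h0 | hpos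
  · rw [h0] at hn; exact absurd hn hne
  · obtain ⟨d, rfl⟩ : ∃ d, n = d + 1 := ⟨n - 1, by omega⟩
    exact mem_desc.mpr ⟨d, by rw [← Function.iterate_succ_apply, hn]⟩

lemma exists_child {ℓ i : Fin k} (hi : i ∈ desc parent ℓ) (hne : i ≠ ℓ) :
    ∃ c, parent c = ℓ ∧ c ≠ ℓ ∧ i ∈ desc parent c := by
  have hex : ∃ n : ℕ, parent^[n] i = ℓ := mem_desc.mp hi
  classical
  set n := Nat.find hex with hn
  have hfind : parent^[n] i = ℓ := Nat.find_spec hex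
  have hn0 : n ≠ 0 := by
    intro h; rw [h] at hfind; exact hne hfind
  obtain ⟨d, hd⟩ : ∃ d, n = d + 1 := ⟨n - 1, by omega⟩
  refine ⟨parent^[d] i, ?_, ?_, mem_desc.mpr ⟨d, rfl⟩⟩
  · have : parent^[d+1] i = ℓ := by rw [← hd]; exact hfind
    rw [← this, Function.iterate_succ_apply']
  · intro h
    exact Nat.find_min hex (by omega : d < n) h

open Classical in
lemma sum_desc_children (hroot : parent root = root)
    (hreach : ∀ i : Fin k, ∃ n : ℕ, parent^[n] i = root) (ℓ : Fin k) :
    (∑ c ∈ Finset.univ.filter (fun c => parent c = ℓ ∧ c ≠ ℓ), (desc parent c).card) + 1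
      ≤ (desc parent ℓ).card := by
  classical
  set S := Finset.univ.filter (fun c => parent c = ℓ ∧ c ≠ ℓ) with hS
  have hmem : ∀ c ∈ S, parent c = ℓ ∧ c ≠ ℓ := by
    intro c hc; simpa [hS] using hc
  have hdisj : ∀ c ∈ S, ∀ c' ∈ S, c ≠ c' → Disjoint (desc parent c) (desc parent c') := by
    intro c hc c' hc' hne
    exact desc_child_disjoint hroot hreach (hmem c hc).1 (hmem c' hc').1
      (hmem c hc).2 (hmem c' hc').2 hne
  have hcard : (S.biUnion (desc parent)).card = ∑ c ∈ S, (desc parent c).card :=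
    Finset.card_biUnion hdisj
  have hsub : S.biUnion (desc parent) ⊆ (desc parent ℓ).erase ℓ := by
    intro j hj
    obtain ⟨c, hc, hjc⟩ := Finset.mem_biUnion.mp hj
    refine Finset.mem_erase.mpr ⟨?_, desc_subset_child (hmem c hc).1 hjc⟩
    intro h
    exact ell_not_mem_desc_child hroot hreach (hmem c hc).1 (hmem c hc).2 (h ▸ hjc)
  have h1 : (S.biUnion (desc parent)).card ≤ ((desc parent ℓ).erase ℓ).card :=
    Finset.card_le_card hsub
  have h2 : ((desc parent ℓ).erase ℓ).card = (desc parent ℓ).card - 1 :=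
    Finset.card_erase_of_mem (mem_desc_self ℓ)
  have h3 : 1 ≤ (desc parent ℓ).card := Finset.card_pos.mpr ⟨ℓ, mem_desc_self ℓ⟩
  omega

end TreeAux

open Classical in
lemma main_rep {α : Type*} [Fintype α] (G : SimpleGraph α) {k : ℕ}
    (parent : Fin k → Fin k) (root : Fin k) (hroot : parent root = root)
    (hreach : ∀ i : Fin k, ∃ n : ℕ, parent^[n] i = root)
    (x y : α) (Ex Ey : Fin k → Prop)
    (SOS : α → Fin k → Set (Fin k → α))
    (hsub : ∀ (u : α) (ℓ : Fin k), ∀ ψ ∈ SOS u ℓ,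
      IsCopyAt G parent ℓ u ψ ∧ RestrOk G parent x y Ex Ey ℓ ψ ∧
      ∀ c : Fin k, parent c = ℓ → c ≠ ℓ →
        ∃ ψ' ∈ SOS (ψ c) c, ∀ i ∈ desc parent c, ψ i = ψ' i)
    (hcompact : ∀ (u : α) (ℓ : Fin k) (C : Finset α),
      C.card ≤ k - (desc parent ℓ).card →
      (∃ ψ : Fin k → α, (IsCopyAt G parent ℓ u ψ ∧ RestrOk G parent x y Ex Ey ℓ ψ ∧
          ∀ c : Fin k, parent c = ℓ → c ≠ ℓ →
            ∃ ψ' ∈ SOS (ψ c) c, ∀ i ∈ desc parent c, ψ i = ψ' i) ∧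
          ∀ i ∈ desc parent ℓ, ψ i ∉ C) →
      ∃ ψ ∈ SOS u ℓ, ∀ i ∈ desc parent ℓ, ψ i ∉ C) :
    ∀ N : ℕ, ∀ ℓ : Fin k, (desc parent ℓ).card ≤ N →
      ∀ φ : Fin k → α, IsCopyAt G parent ℓ (φ ℓ) φ →
      RestrOk G parent x y Ex Ey ℓ φ →
      ∀ C : Finset α, C.card + (desc parent ℓ).card ≤ k →
      (∀ i ∈ desc parent ℓ, φ i ∉ C) →
      ∃ ψ ∈ SOS (φ ℓ) ℓ, ∀ i ∈ desc parent ℓ, ψ i ∉ C := by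
  intro N
  induction N with
  | zero =>
    intro ℓ hcard
    exact absurd hcard (by
      have : 0 < (desc parent ℓ).card :=
        Finset.card_pos.mpr ⟨ℓ, TreeAux.mem_desc_self ℓ⟩
      omega)
  | succ N IH =>
    intro ℓ hcard φ hcopy hrestr C hCk hCavoid
    classical
    obtain ⟨-, hinj, hadj⟩ := hcopy
    set Ch : Finset (Fin k) := Finset.univ.filter (fun c => parent c = ℓ ∧ c ≠ ℓ) with hCh
    have hChmem : ∀ c ∈ Ch, parent c = ℓ ∧ c ≠ ℓ := fun c hc => by simpa [hCh] using hc
    have hChof : ∀ c : Fin k, parent c = ℓ → c ≠ ℓ → c ∈ Ch := fun c h1 h2 => by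
      simp [hCh, h1, h2]
    have hChsum := TreeAux.sum_desc_children hroot hreach ℓ
    rw [← hCh] at hChsum
    have hdescℓk : (desc parent ℓ).card ≤ k := by
      simpa using Finset.card_le_univ (desc parent ℓ)
    -- descendants of a child lie in (desc ℓ).erase ℓ
    have hsubchild : ∀ c : Fin k, parent c = ℓ → c ≠ ℓ →
        ∀ i ∈ desc parent c, i ∈ desc parent ℓ ∧ i ≠ ℓ := by
      intro c h1 h2 i hi
      refine ⟨TreeAux.desc_subset_child h1 hi, ?_⟩
      intro h
      exact TreeAux.ell_not_mem_desc_child hroot hreach h1 h2 (h ▸ hi)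
    have hchildcard : ∀ c : Fin k, parent c = ℓ → c ≠ ℓ →
        (desc parent c).card < (desc parent ℓ).card := by
      intro c h1 h2
      have hsub : desc parent c ⊆ (desc parent ℓ).erase ℓ := by
        intro i hi
        obtain ⟨h3, h4⟩ := hsubchild c h1 h2 i hi
        exact Finset.mem_erase.mpr ⟨h4, h3⟩
      have := Finset.card_le_card hsub
      have h5 := Finset.card_erase_of_mem (TreeAux.mem_desc_self (parent := parent) ℓ)
      have h6 : 0 < (desc parent ℓ).card :=
        Finset.card_pos.mpr ⟨ℓ, TreeAux.mem_desc_self ℓ⟩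
      omega
    -- restricted copies for children
    have hchildcopy : ∀ c : Fin k, parent c = ℓ → c ≠ ℓ →
        IsCopyAt G parent c (φ c) φ ∧ RestrOk G parent x y Ex Ey c φ := by
      intro c h1 h2
      refine ⟨⟨rfl, hinj.mono ?_, ?_⟩, ?_⟩
      · exact fun i hi => (hsubchild c h1 h2 i hi).1
      · intro j hj hjc
        obtain ⟨h3, h4⟩ := hsubchild c h1 h2 j hj
        exact hadj j h3 h4
      · intro i hi
        exact hrestr i (hsubchild c h1 h2 i hi).1
    -- inner induction over a set of children: pick pairwise-disjoint stored subtrees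
    have Q : ∀ S : Finset (Fin k), S ⊆ Ch →
        ∀ D : Finset α, D.card + (∑ c ∈ S, (desc parent c).card) ≤ k →
        (∀ c ∈ S, ∀ i ∈ desc parent c, φ i ∉ D) →
        ∃ Ψ : Fin k → (Fin k → α),
          (∀ c ∈ S, Ψ c ∈ SOS (φ c) c) ∧
          (∀ c ∈ S, ∀ i ∈ desc parent c, Ψ c i ∉ D) ∧
          (∀ c ∈ S, ∀ c' ∈ S, c ≠ c' →
            ∀ i ∈ desc parent c, ∀ j ∈ desc parent c', Ψ c i ≠ Ψ c' j) := by
      intro S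
      induction S using Finset.induction_on with
      | empty =>
        intro _ D _ _
        exact ⟨fun _ => φ, by simp, by simp, by simp⟩
      | @insert a S ha IHS =>
        intro hSCh D hDk hDavoid
        have haCh : a ∈ Ch := hSCh (Finset.mem_insert_self a S)
        obtain ⟨ha1, ha2⟩ := hChmem a haCh
        have hSsub : S ⊆ Ch := fun c hc => hSCh (Finset.mem_insert_of_mem hc)
        have hsumins : ∑ c ∈ insert a S, (desc parent c).card
            = (desc parent a).card + ∑ c ∈ S, (desc parent c).card :=
          Finset.sum_insert ha
        have hdisjaS : ∀ c' ∈ S, Disjoint (desc parent a) (desc parent c') := by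
          intro c' hc'
          obtain ⟨h1, h2⟩ := hChmem c' (hSsub hc')
          exact TreeAux.desc_child_disjoint hroot hreach ha1 h1 ha2 h2
            (fun h => ha (h ▸ hc'))
        -- first: pick the stored subtree for child a
        set B : Finset (Fin k) := S.biUnion (desc parent) with hB
        set D1 : Finset α := D ∪ B.image φ with hD1
        have hBcard : B.card ≤ ∑ c ∈ S, (desc parent c).card := Finset.card_biUnion_le
        have hD1card : D1.card ≤ D.card + ∑ c ∈ S, (desc parent c).card := by
          calc D1.card ≤ D.card + (B.image φ).card := Finset.card_union_le _ _
            _ ≤ D.card + B.card := by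
                have := Finset.card_image_le (s := B) (f := φ)
                omega
            _ ≤ _ := by omega
        have hφavoidD1 : ∀ i ∈ desc parent a, φ i ∉ D1 := by
          intro i hi hmem
          rcases Finset.mem_union.mp hmem with h | h
          · exact hDavoid a (Finset.mem_insert_self a S) i hi h
          · obtain ⟨j, hj, hji⟩ := Finset.mem_image.mp h
            obtain ⟨c', hc', hjc'⟩ := Finset.mem_biUnion.mp hj
            obtain ⟨h1, h2⟩ := hChmem c' (hSsub hc')
            have hij : j = i := hinj (Finset.mem_coe.mpr
              (hsubchild c' h1 h2 j hjc').1)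
              (Finset.mem_coe.mpr (hsubchild a ha1 ha2 i hi).1) hji
            rw [hij] at hjc'
            exact (Finset.disjoint_left.mp (hdisjaS c' hc') hi) hjc'
        obtain ⟨ψa, hψaSOS, hψaavoid⟩ :=
          IH a (by have := hchildcard a ha1 ha2; omega) φ
            (hchildcopy a ha1 ha2).1 (hchildcopy a ha1 ha2).2 D1
            (by rw [hsumins] at hDk; omega) hφavoidD1
        -- then: the rest, avoiding also the image of ψa
        set D2 : Finset α := D ∪ (desc parent a).image ψa with hD2
        have hD2card : D2.card ≤ D.card + (desc parent a).card := by
          calc D2.card ≤ D.card + ((desc parent a).image ψa).card :=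
                Finset.card_union_le _ _
            _ ≤ _ := by
                have := Finset.card_image_le (s := desc parent a) (f := ψa)
                omega
        have hφavoidD2 : ∀ c ∈ S, ∀ i ∈ desc parent c, φ i ∉ D2 := by
          intro c hc i hi hmem
          rcases Finset.mem_union.mp hmem with h | h
          · exact hDavoid c (Finset.mem_insert_of_mem hc) i hi h
          · obtain ⟨j, hj, hji⟩ := Finset.mem_image.mp h
            apply hψaavoid j hj
            rw [hji]
            refine Finset.mem_union_right _ (Finset.mem_image.mpr ⟨i, ?_, rfl⟩)
            exact Finset.mem_biUnion.mpr ⟨c, hc, hi⟩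
        obtain ⟨Ψ', hΨ'SOS, hΨ'avoid, hΨ'disj⟩ :=
          IHS hSsub D2 (by rw [hsumins] at hDk; omega) hφavoidD2
        refine ⟨fun c => if c = a then ψa else Ψ' c, ?_, ?_, ?_⟩
        · intro c hc
          rcases Finset.mem_insert.mp hc with rfl | hc
          · simp [hψaSOS]
          · have hca : c ≠ a := fun h => ha (h ▸ hc)
            simpa [hca] using hΨ'SOS c hc
        · intro c hc i hi hmem
          dsimp only at hmem
          rcases Finset.mem_insert.mp hc with rfl | hc
          · rw [if_pos rfl] at hmem
            exact hψaavoid i hi (Finset.mem_union_left _ hmem)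
          · have hca : c ≠ a := fun h => ha (h ▸ hc)
            rw [if_neg hca] at hmem
            exact hΨ'avoid c hc i hi (Finset.mem_union_left _ hmem)
        · intro c hc c' hc' hne i hi j hj
          dsimp only
          rcases Finset.mem_insert.mp hc with hceq | hcS
          · rcases Finset.mem_insert.mp hc' with hceq' | hcS'
            · exact absurd (hceq.trans hceq'.symm) hne
            · have hca : c' ≠ a := fun h => ha (h ▸ hcS')
              rw [if_pos hceq, if_neg hca]
              intro heq
              apply hΨ'avoid c' hcS' j hj
              rw [← heq]
              refine Finset.mem_union_right _ (Finset.mem_image.mpr ⟨i, ?_, rfl⟩)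
              rw [← hceq]; exact hi
          · rcases Finset.mem_insert.mp hc' with hceq' | hcS'
            · have hca : c ≠ a := fun h => ha (h ▸ hcS)
              rw [if_pos hceq', if_neg hca]
              intro heq
              apply hΨ'avoid c hcS i hi
              rw [heq]
              refine Finset.mem_union_right _ (Finset.mem_image.mpr ⟨j, ?_, rfl⟩)
              rw [← hceq']; exact hj
            · have h1 : c ≠ a := fun h => ha (h ▸ hcS)
              have h2 : c' ≠ a := fun h => ha (h ▸ hcS')
              rw [if_neg h1, if_neg h2]
              exact hΨ'disj c hcS c' hcS' hne i hi j hj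
    -- apply Q to all children with D₀ = C ∪ {φ ℓ}
    set D0 : Finset α := C ∪ {φ ℓ} with hD0
    have hD0k : D0.card + ∑ c ∈ Ch, (desc parent c).card ≤ k := by
      have h1 : D0.card ≤ C.card + 1 := by
        calc D0.card ≤ C.card + ({φ ℓ} : Finset α).card := Finset.card_union_le _ _
          _ = C.card + 1 := by simp
      omega
    have hφavoidD0 : ∀ c ∈ Ch, ∀ i ∈ desc parent c, φ i ∉ D0 := by
      intro c hc i hi hmem
      obtain ⟨h1, h2⟩ := hChmem c hc
      obtain ⟨h3, h4⟩ := hsubchild c h1 h2 i hi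
      rcases Finset.mem_union.mp hmem with h | h
      · exact hCavoid i h3 h
      · have : φ i = φ ℓ := by simpa using h
        exact h4 (hinj (Finset.mem_coe.mpr h3)
          (Finset.mem_coe.mpr (TreeAux.mem_desc_self ℓ)) this)
    obtain ⟨Ψ, hΨSOS, hΨavoid, hΨdisj⟩ := Q Ch (le_refl _) D0 hD0k hφavoidD0
    -- glue
    obtain ⟨ψ, hψdef⟩ : ∃ ψ : Fin k → α, ψ = fun i =>
        if h : ∃ c, parent c = ℓ ∧ c ≠ ℓ ∧ i ∈ desc parent c
        then Ψ (Classical.choose h) i else φ i := ⟨_, rfl⟩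
    have hψℓ : ψ ℓ = φ ℓ := by
      rw [hψdef]
      dsimp only
      rw [dif_neg]
      rintro ⟨c, h1, h2, h3⟩
      exact TreeAux.ell_not_mem_desc_child hroot hreach h1 h2 h3
    have hψc : ∀ c : Fin k, parent c = ℓ → c ≠ ℓ → ∀ i ∈ desc parent c,
        ψ i = Ψ c i := by
      intro c h1 h2 i hi
      have hex : ∃ c', parent c' = ℓ ∧ c' ≠ ℓ ∧ i ∈ desc parent c' := ⟨c, h1, h2, hi⟩
      rw [hψdef]
      dsimp only
      rw [dif_pos hex]
      obtain ⟨g1, g2, g3⟩ := Classical.choose_spec hex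
      by_cases hcc : Classical.choose hex = c
      · rw [hcc]
      · exact absurd hi (Finset.disjoint_left.mp
          (TreeAux.desc_child_disjoint hroot hreach g1 h1 g2 h2 hcc) g3)
    -- facts about each chosen child subtree
    have hΨfacts : ∀ c : Fin k, parent c = ℓ → c ≠ ℓ →
        IsCopyAt G parent c (φ c) (Ψ c) ∧ RestrOk G parent x y Ex Ey c (Ψ c) := by
      intro c h1 h2
      have := hsub (φ c) c (Ψ c) (hΨSOS c (hChof c h1 h2))
      exact ⟨this.1, this.2.1⟩
    -- build the witness for hcompact
    have hcopyψ : IsCopyAt G parent ℓ (φ ℓ) ψ := by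
      refine ⟨hψℓ, ?_, ?_⟩
      · intro i hi j hj heq
        rw [Finset.mem_coe] at hi hj
        by_cases hiℓ : i = ℓ
        · by_cases hjℓ : j = ℓ
          · rw [hiℓ, hjℓ]
          · obtain ⟨c, h1, h2, h3⟩ := TreeAux.exists_child hj hjℓ
            rw [hiℓ, hψℓ, hψc c h1 h2 j h3] at heq
            exact absurd (Finset.mem_union_right _ (by simp [← heq]))
              (hΨavoid c (hChof c h1 h2) j h3)
        · by_cases hjℓ : j = ℓ
          · obtain ⟨c, h1, h2, h3⟩ := TreeAux.exists_child hi hiℓ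
            rw [hjℓ, hψℓ, hψc c h1 h2 i h3] at heq
            exact absurd (Finset.mem_union_right _ (by simp [heq]))
              (hΨavoid c (hChof c h1 h2) i h3)
          · obtain ⟨c, h1, h2, h3⟩ := TreeAux.exists_child hi hiℓ
            obtain ⟨c', g1, g2, g3⟩ := TreeAux.exists_child hj hjℓ
            rw [hψc c h1 h2 i h3, hψc c' g1 g2 j g3] at heq
            by_cases hcc : c = c'
            · subst hcc
              exact (hΨfacts c h1 h2).1.2.1 (Finset.mem_coe.mpr h3)
                (Finset.mem_coe.mpr g3) heq
            · exact absurd heq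
                (hΨdisj c (hChof c h1 h2) c' (hChof c' g1 g2) hcc i h3 j g3)
      · intro j hj hjℓ
        obtain ⟨c, h1, h2, h3⟩ := TreeAux.exists_child hj hjℓ
        by_cases hjc : j = c
        · subst hjc
          rw [hψc j h1 h2 j h3, (hΨfacts j h1 h2).1.1, h1, hψℓ]
          have := hadj j hj hjℓ
          rw [h1] at this
          exact this
        · rw [hψc c h1 h2 j h3, hψc c h1 h2 (parent j) (TreeAux.parent_mem_desc h3 hjc)]
          exact (hΨfacts c h1 h2).1.2.2 j h3 hjc
    have hrestrψ : RestrOk G parent x y Ex Ey ℓ ψ := by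
      intro i hi
      by_cases hiℓ : i = ℓ
      · rw [hiℓ, hψℓ]
        exact hrestr ℓ (TreeAux.mem_desc_self ℓ)
      · obtain ⟨c, h1, h2, h3⟩ := TreeAux.exists_child hi hiℓ
        rw [hψc c h1 h2 i h3]
        exact (hΨfacts c h1 h2).2 i h3
    have hchildψ : ∀ c : Fin k, parent c = ℓ → c ≠ ℓ →
        ∃ ψ' ∈ SOS (ψ c) c, ∀ i ∈ desc parent c, ψ i = ψ' i := by
      intro c h1 h2
      have hψcc : ψ c = φ c := by
        rw [hψc c h1 h2 c (TreeAux.mem_desc_self c)]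
        exact (hΨfacts c h1 h2).1.1
      refine ⟨Ψ c, ?_, hψc c h1 h2⟩
      rw [hψcc]
      exact hΨSOS c (hChof c h1 h2)
    have havoidψ : ∀ i ∈ desc parent ℓ, ψ i ∉ C := by
      intro i hi
      by_cases hiℓ : i = ℓ
      · rw [hiℓ, hψℓ]
        exact hCavoid ℓ (TreeAux.mem_desc_self ℓ)
      · obtain ⟨c, h1, h2, h3⟩ := TreeAux.exists_child hi hiℓ
        rw [hψc c h1 h2 i h3]
        intro h
        exact hΨavoid c (hChof c h1 h2) i h3 (Finset.mem_union_left _ h)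
    exact hcompact (φ ℓ) ℓ C (by omega)
      ⟨ψ, ⟨hcopyψ, hrestrψ, hchildψ⟩, havoidψ⟩

/-- Correctness of the restricted tree-detection algorithm for testing the pattern
`H = (f, T, 𝓔)` anchored at a fixed edge `e = {x,y}` of `G`. Suppose the families
`SOS_u(T_ℓ)` are built inductively from children's families as in the deterministic
tree-detection algorithm, with the restriction filter, each being a compact
`(|V(T_ℓ)|, k − |V(T_ℓ)|)`-representation of the glued restricted family. Then some
`SOS_u(T_r)` is nonempty iff `G` contains a subgraph isomorphic to `H` whose distinguished
edge is mapped onto `e` with `x ↦ x` and `y ↦ y`. -/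
theorem anchored_pattern_detection_correct {α : Type*} [Fintype α] (G : SimpleGraph α)
    {k : ℕ} (parent : Fin k → Fin k) (root : Fin k) (hroot : parent root = root)
    (hreach : ∀ i : Fin k, ∃ n : ℕ, parent^[n] i = root)
    (x y : α) (hxy : G.Adj x y) (Ex Ey : Fin k → Prop)
    (SOS : α → Fin k → Set (Fin k → α))
    (hsub : ∀ (u : α) (ℓ : Fin k), ∀ ψ ∈ SOS u ℓ,
      IsCopyAt G parent ℓ u ψ ∧ RestrOk G parent x y Ex Ey ℓ ψ ∧
      ∀ c : Fin k, parent c = ℓ → c ≠ ℓ →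
        ∃ ψ' ∈ SOS (ψ c) c, ∀ i ∈ desc parent c, ψ i = ψ' i)
    (hcompact : ∀ (u : α) (ℓ : Fin k) (C : Finset α),
      C.card ≤ k - (desc parent ℓ).card →
      (∃ ψ : Fin k → α, (IsCopyAt G parent ℓ u ψ ∧ RestrOk G parent x y Ex Ey ℓ ψ ∧
          ∀ c : Fin k, parent c = ℓ → c ≠ ℓ →
            ∃ ψ' ∈ SOS (ψ c) c, ∀ i ∈ desc parent c, ψ i = ψ' i) ∧
          ∀ i ∈ desc parent ℓ, ψ i ∉ C) →
      ∃ ψ ∈ SOS u ℓ, ∀ i ∈ desc parent ℓ, ψ i ∉ C) :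
    (∃ u : α, (SOS u root).Nonempty) ↔
      ∃ φ : Fin k → α, IsCopyAt G parent root (φ root) φ ∧
        RestrOk G parent x y Ex Ey root φ := by
  constructor
  · rintro ⟨u, ψ, hψ⟩
    obtain ⟨⟨h1, h2, h3⟩, hrestr, -⟩ := hsub u root ψ hψ
    exact ⟨ψ, ⟨rfl, h2, h3⟩, hrestr⟩
  · rintro ⟨φ, hcopy, hrestr⟩
    have hk : (desc parent root).card ≤ k := by
      simpa using Finset.card_le_univ (desc parent root)
    obtain ⟨ψ, hψ, -⟩ := main_rep G parent root hroot hreach x y Ex Ey SOS hsub hcompact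
      (desc parent root).card root (le_refl _) φ hcopy hrestr ∅ (by simpa using hk) (by simp)
    exact ⟨φ root, ψ, hψ⟩
end
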